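/- arXiv:1802.06361 — 9 statements merged into one kernel-verified Lean document; each statement's English description precedes it below -/
import Mathlib

section
/- Suppose T ≥ 2 and K ⊆ V is a nonempty set with |K| = k and score(K) = d > 0. Then there exists a set S ⊆ V such that every frame is covered by S (i.e., for every i ∈ {1, …, T}, G_i has at least one edge with both endpoints in S) and |S| ≤ 2 · ⌈(k · ln T) / d⌉. Consequently score(S) ≥ 1 / |S| ≥ d / (2(k ln T + 1)). -/
open scoped Classical

noncomputable section

/-- The set of edges of `G` with both endpoints in `S`. -/
def edgesIn {V : Type*} [Fintype V] (G : SimpleGraph V) (S : Finset V) : Finset (Sym2 V) :=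
  Finset.univ.filter (fun e => e ∈ G.edgeSet ∧ ∀ v ∈ e, v ∈ S)

/-- The DCS-MA objective: `min_{1 ≤ i ≤ T} |E_i[S]| / |S|`, as a rational number. -/
def score {V : Type*} [Fintype V] {T : ℕ} (G : Fin T → SimpleGraph V) (S : Finset V) : ℚ :=
  if h : T = 0 then 0
  else
    Finset.univ.inf'
      (Finset.univ_nonempty_iff.mpr (Fin.pos_iff_nonempty.mp (Nat.pos_of_ne_zero h)))
      (fun i => ((edgesIn (G i) S).card : ℚ) / S.card)

set_option maxHeartbeats 1000000 in
/-- if `T ≥ 2` and `K` is nonempty with `|K| = k` and `score(K) = d > 0`, then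
there is a set `S` covering every frame (each frame has an edge inside `S`) with
`|S| ≤ 2⌈(k ln T)/d⌉`, and consequently `score(S) ≥ 1/|S| ≥ d / (2(k ln T + 1))`. -/
theorem stmt2 {V : Type*} [Fintype V] {T : ℕ} (hT : 2 ≤ T)
    (G : Fin T → SimpleGraph V) (K : Finset V) (hK : K.Nonempty)
    (k : ℕ) (hk : K.card = k) (d : ℚ) (hd : score G K = d) (hdpos : 0 < d) :
    ∃ S : Finset V,
      (∀ i, (edgesIn (G i) S).Nonempty) ∧
      (S.card : ℤ) ≤ 2 * ⌈((k : ℝ) * Real.log T) / (d : ℝ)⌉ ∧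
      (1 : ℚ) / S.card ≤ score G S ∧
      (d : ℝ) / (2 * ((k : ℝ) * Real.log T + 1)) ≤ 1 / (S.card : ℝ) := by
  classical
  have hT0 : T ≠ 0 := by omega
  have hkpos : 0 < k := hk ▸ Finset.card_pos.mpr hK
  have hkQ : (0 : ℚ) < (k : ℚ) := by exact_mod_cast hkpos
  set Q : Fin T → Finset (Sym2 V) := fun i => edgesIn (G i) K with hQdef
  -- each frame has at least d*k edges inside K
  have hcard : ∀ i, d * k ≤ ((Q i).card : ℚ) := by
    intro i
    have h1 : d ≤ ((Q i).card : ℚ) / K.card := by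
      rw [← hd, score, dif_neg hT0]
      exact Finset.inf'_le _ (Finset.mem_univ i)
    rw [hk] at h1
    rw [le_div_iff₀ hkQ] at h1
    linarith
  set P : Finset (Sym2 V) := K.offDiag.image Sym2.mk.uncurry with hPdef
  have hQP : ∀ i, Q i ⊆ P := by
    intro i e he
    simp only [hQdef, edgesIn, Finset.mem_filter, Finset.mem_univ, true_and] at he
    obtain ⟨hes, hev⟩ := he
    induction e using Sym2.ind with
    | _ a b =>
      have hadj : (G i).Adj a b := hes
      have hab : a ≠ b := hadj.ne
      refine Finset.mem_image.mpr ⟨(a, b), Finset.mem_offDiag.mpr ⟨?_, ?_, hab⟩, rfl⟩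
      · exact hev a (Sym2.mem_mk_left a b)
      · exact hev b (Sym2.mem_mk_right a b)
  have h2P : 2 * P.card = k * k - k := by
    rw [hPdef, Sym2.two_mul_card_image_offDiag, Finset.offDiag_card, hk]
  have h2PQ : (2 * P.card : ℚ) ≤ (k : ℚ) * k := by
    have : 2 * P.card ≤ k * k := by omega
    exact_mod_cast this
  have h2PQ' : (2 * P.card : ℚ) = (k : ℚ) * k - k := by
    have hkk : k ≤ k * k := Nat.le_mul_of_pos_left k hkpos
    have : ((2 * P.card : ℕ) : ℚ) = ((k * k - k : ℕ) : ℚ) := by rw [h2P]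
    rw [Nat.cast_sub hkk] at this
    push_cast at this ⊢
    linarith
  -- P is nonempty
  have i0 : Fin T := ⟨0, by omega⟩
  have hQ0 : (Q i0).Nonempty := by
    rw [← Finset.card_pos]
    by_contra h
    push_neg at h
    interval_cases h' : (Q i0).card
    · have := hcard i0
      rw [h'] at this
      push_cast at this
      nlinarith
  have hPne : P.Nonempty := hQ0.mono (hQP i0)
  -- d is at most (k-1)/2
  have hdk : 2 * d ≤ (k : ℚ) - 1 := by
    have h1 := hcard i0
    have h2 : ((Q i0).card : ℚ) ≤ (P.card : ℚ) := by
      exact_mod_cast Finset.card_le_card (hQP i0)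
    nlinarith [h2PQ']
  set c : ℚ := 2 * d / k with hcdef
  have hc0 : 0 < c := by positivity
  have hc1 : c ≤ 1 := by
    rw [hcdef, div_le_one hkQ]; linarith
  -- averaging step
  have avg : ∀ F : Finset (Fin T), F.Nonempty →
      ∃ e ∈ P, c * F.card ≤ ((F.filter (fun i => e ∈ Q i)).card : ℚ) := by
    intro F hF
    have e1 : ∑ e ∈ P, (F.filter (fun i => e ∈ Q i)).card = ∑ i ∈ F, (Q i).card := by
      simp_rw [Finset.card_filter]
      rw [Finset.sum_comm]
      refine Finset.sum_congr rfl fun i _ => ?_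
      rw [← Finset.card_filter, Finset.filter_mem_eq_inter,
        Finset.inter_eq_right.mpr (hQP i)]
    have hsum : (F.card : ℚ) * (d * k) ≤
        ∑ e ∈ P, ((F.filter (fun i => e ∈ Q i)).card : ℚ) := by
      have : ∑ e ∈ P, ((F.filter (fun i => e ∈ Q i)).card : ℚ)
          = ∑ i ∈ F, ((Q i).card : ℚ) := by
        push_cast [e1]; norm_cast
      rw [this]
      calc (F.card : ℚ) * (d * k) = F.card • (d * k) := by
            rw [nsmul_eq_mul]
        _ ≤ ∑ i ∈ F, ((Q i).card : ℚ) := Finset.card_nsmul_le_sum F _ _ fun i _ => hcard i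
    have hconst : ∑ _e ∈ P, (c * F.card) ≤
        ∑ e ∈ P, ((F.filter (fun i => e ∈ Q i)).card : ℚ) := by
      rw [Finset.sum_const, nsmul_eq_mul]
      have hF0 : (0 : ℚ) ≤ F.card := by positivity
      have key : (P.card : ℚ) * c ≤ d * k := by
        rw [hcdef]
        rw [mul_div_assoc', div_le_iff₀ hkQ]
        nlinarith
      nlinarith
    obtain ⟨e, he, hle⟩ := Finset.exists_le_of_sum_le hPne hconst
    exact ⟨e, he, hle⟩
  -- greedy induction
  have greedy : ∀ m : ℕ, ∃ A : Finset (Sym2 V), A.card ≤ m ∧ A ⊆ P ∧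
      ((Finset.univ.filter (fun i : Fin T => ∀ e ∈ A, e ∉ Q i)).card : ℚ)
        ≤ T * (1 - c) ^ m := by
    intro m
    induction m with
    | zero =>
      refine ⟨∅, le_rfl, Finset.empty_subset _, ?_⟩
      simp only [pow_zero, mul_one]
      calc ((Finset.univ.filter (fun i : Fin T => ∀ e ∈ (∅ : Finset (Sym2 V)), e ∉ Q i)).card : ℚ)
          ≤ (Finset.univ : Finset (Fin T)).card := by
            exact_mod_cast Finset.card_le_card (Finset.filter_subset _ _)
        _ = T := by simp
    | succ m ih =>
      obtain ⟨A, hA1, hA2, hA3⟩ := ih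
      set F := Finset.univ.filter (fun i : Fin T => ∀ e ∈ A, e ∉ Q i) with hFdef
      by_cases hFne : F.Nonempty
      · obtain ⟨e, heP, he⟩ := avg F hFne
        refine ⟨insert e A, ?_, Finset.insert_subset heP hA2, ?_⟩
        · exact (Finset.card_insert_le _ _).trans (by omega)
        · have hset : Finset.univ.filter (fun i : Fin T => ∀ f ∈ insert e A, f ∉ Q i)
              = F.filter (fun i => e ∉ Q i) := by
            ext i
            simp only [hFdef, Finset.mem_filter, Finset.mem_univ, true_and,
              Finset.mem_insert]
            constructor
            · intro h
              exact ⟨fun f hf => h f (Or.inr hf), h e (Or.inl rfl)⟩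
            · rintro ⟨h1, h2⟩ f (rfl | hf)
              · exact h2
              · exact h1 f hf
          rw [hset]
          have hsplit := Finset.card_filter_add_card_filter_not
            (s := F) (p := fun i => e ∈ Q i)
          have h4 : ((F.filter (fun i => e ∉ Q i)).card : ℚ) ≤ (1 - c) * F.card := by
            have hc' : ((F.filter (fun i => e ∈ Q i)).card : ℚ)
                + ((F.filter (fun i => e ∉ Q i)).card : ℚ) = (F.card : ℚ) := by
              exact_mod_cast hsplit
            nlinarith
          have h5 : (0 : ℚ) ≤ 1 - c := by linarith
          calc ((F.filter (fun i => e ∉ Q i)).card : ℚ)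
              ≤ (1 - c) * F.card := h4
            _ ≤ (1 - c) * (T * (1 - c) ^ m) := by
                exact mul_le_mul_of_nonneg_left hA3 h5
            _ = T * (1 - c) ^ (m + 1) := by ring
      · refine ⟨A, hA1.trans (Nat.le_succ m), hA2, ?_⟩
        rw [Finset.not_nonempty_iff_eq_empty] at hFne
        rw [← hFdef, hFne]
        simp only [Finset.card_empty, Nat.cast_zero]
        have h5 : (0 : ℚ) ≤ 1 - c := by linarith
        positivity
  -- analytic part
  set x : ℝ := ((k : ℝ) * Real.log T) / (d : ℝ) with hxdef
  have hdR : (0 : ℝ) < ((d : ℚ) : ℝ) := by exact_mod_cast hdpos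
  have hTR : (1 : ℝ) < (T : ℝ) := by exact_mod_cast (by omega : 1 < T)
  have hlogT : 0 < Real.log T := Real.log_pos hTR
  have hkR : (0 : ℝ) < (k : ℝ) := by exact_mod_cast hkpos
  have hx0 : 0 < x := by
    rw [hxdef]; positivity
  have hdkR : 2 * ((d : ℚ) : ℝ) ≤ (k : ℝ) - 1 := by exact_mod_cast hdk
  have hlog2 : Real.log 2 ≤ Real.log T := by
    apply Real.log_le_log (by norm_num)
    exact_mod_cast hT
  have hx1 : 1 < x := by
    rw [hxdef, lt_div_iff₀ hdR]
    nlinarith [Real.log_two_gt_d9, hdR, hlog2]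
  set m : ℕ := ⌈x / 2⌉₊ with hmdef
  have hm1 : 1 ≤ m := Nat.one_le_iff_ne_zero.mpr (by
    rw [hmdef]
    exact Nat.ceil_pos.mpr (by positivity) |>.ne')
  have hmx2 : x / 2 ≤ (m : ℝ) := Nat.le_ceil _
  have hmlex : (m : ℝ) ≤ x := by
    rcases le_or_gt x 2 with h | h
    · have : m ≤ 1 := Nat.ceil_le.mpr (by linarith)
      have : (m : ℝ) ≤ 1 := by exact_mod_cast this
      linarith
    · have := Nat.ceil_lt_add_one (show (0:ℝ) ≤ x / 2 by positivity)
      rw [← hmdef] at this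
      linarith
  obtain ⟨A, hA1, hA2, hA3⟩ := greedy m
  set cr : ℝ := 2 * ((d : ℚ) : ℝ) / (k : ℝ) with hcrdef
  have hcr0 : 0 < cr := by positivity
  have hcr1 : cr ≤ 1 := by
    rw [hcrdef, div_le_one hkR]; linarith
  have hcast : ((Finset.univ.filter (fun i : Fin T => ∀ e ∈ A, e ∉ Q i)).card : ℝ)
      ≤ (T : ℝ) * (1 - cr) ^ m := by
    have := hA3
    rw [hcdef] at this
    have h := (Rat.cast_le (K := ℝ)).mpr this
    push_cast at h
    convert h using 3
  have hlt1 : (T : ℝ) * (1 - cr) ^ m < 1 := by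
    have h1 : 1 - cr < Real.exp (-cr) := by
      have := Real.add_one_lt_exp (x := -cr) (by linarith)
      linarith
    have h2 : (1 - cr) ^ m < Real.exp (-cr) ^ m :=
      pow_lt_pow_left₀ h1 (by linarith) (by omega)
    have h3 : Real.exp (-cr) ^ m = Real.exp (-(cr * m)) := by
      rw [← Real.exp_nat_mul]; ring_nf
    have hcx : cr * (x / 2) = Real.log T := by
      rw [hcrdef, hxdef]; field_simp
    have h4 : Real.log T ≤ cr * m := by
      calc Real.log T = cr * (x / 2) := hcx.symm
        _ ≤ cr * m := by exact mul_le_mul_of_nonneg_left hmx2 hcr0.le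
    have h5 : Real.exp (-(cr * m)) ≤ Real.exp (-Real.log T) := by
      apply Real.exp_le_exp.mpr; linarith
    have h6 : Real.exp (-Real.log T) = 1 / T := by
      rw [Real.exp_neg, Real.exp_log (by linarith)]
      rw [one_div]
    calc (T : ℝ) * (1 - cr) ^ m < (T : ℝ) * Real.exp (-(cr * m)) := by
          rw [← h3]
          exact mul_lt_mul_of_pos_left h2 (by linarith)
      _ ≤ (T : ℝ) * (1 / T) := mul_le_mul_of_nonneg_left (h5.trans h6.le) (by linarith)
      _ = 1 := by field_simp
  have hcov : ∀ i, ∃ e ∈ A, e ∈ Q i := by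
    intro i
    by_contra h
    push_neg at h
    have hi : i ∈ Finset.univ.filter (fun i : Fin T => ∀ e ∈ A, e ∉ Q i) :=
      Finset.mem_filter.mpr ⟨Finset.mem_univ i, h⟩
    have hge : (1 : ℝ) ≤ ((Finset.univ.filter (fun i : Fin T => ∀ e ∈ A, e ∉ Q i)).card : ℝ) := by
      have : 1 ≤ (Finset.univ.filter (fun i : Fin T => ∀ e ∈ A, e ∉ Q i)).card :=
        Finset.card_pos.mpr ⟨i, hi⟩
      exact_mod_cast this
    linarith [hcast]
  -- the set S
  set S : Finset V := Finset.univ.filter (fun v => ∃ e ∈ A, v ∈ e) with hSdef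
  have hSi : ∀ i, (edgesIn (G i) S).Nonempty := by
    intro i
    obtain ⟨e, heA, heQ⟩ := hcov i
    simp only [hQdef, edgesIn, Finset.mem_filter, Finset.mem_univ, true_and] at heQ
    refine ⟨e, ?_⟩
    simp only [edgesIn, Finset.mem_filter, Finset.mem_univ, true_and]
    exact ⟨heQ.1, fun v hv => Finset.mem_filter.mpr ⟨Finset.mem_univ v, e, heA, hv⟩⟩
  have hS2A : S.card ≤ 2 * A.card := by
    have hsub : S ⊆ A.biUnion (fun e => Finset.univ.filter (· ∈ e)) := by
      intro v hv
      simp only [hSdef, Finset.mem_filter, Finset.mem_univ, true_and] at hv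
      obtain ⟨e, he, hve⟩ := hv
      exact Finset.mem_biUnion.mpr ⟨e, he, Finset.mem_filter.mpr ⟨Finset.mem_univ v, hve⟩⟩
    have h2 : ∀ e : Sym2 V, (Finset.univ.filter (· ∈ e)).card ≤ 2 := by
      intro e
      induction e using Sym2.ind with
      | _ a b =>
        have hsub2 : Finset.univ.filter (· ∈ s(a, b)) ⊆ {a, b} := by
          intro v hv
          simp only [Finset.mem_filter, Finset.mem_univ, true_and, Sym2.mem_iff] at hv
          simp only [Finset.mem_insert, Finset.mem_singleton]
          exact hv
        calc (Finset.univ.filter (· ∈ s(a, b))).card ≤ ({a, b} : Finset V).card :=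
              Finset.card_le_card hsub2
          _ ≤ 2 := by
              apply (Finset.card_insert_le _ _).trans
              simp
    calc S.card ≤ (A.biUnion (fun e => Finset.univ.filter (· ∈ e))).card :=
          Finset.card_le_card hsub
      _ ≤ ∑ e ∈ A, (Finset.univ.filter (· ∈ e)).card := Finset.card_biUnion_le
      _ ≤ ∑ _e ∈ A, 2 := Finset.sum_le_sum fun e _ => h2 e
      _ = 2 * A.card := by rw [Finset.sum_const]; ring
  have hScard : S.card ≤ 2 * m := hS2A.trans (by omega)
  have hSne : S.Nonempty := by
    obtain ⟨e, he⟩ := hSi i0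
    simp only [edgesIn, Finset.mem_filter, Finset.mem_univ, true_and] at he
    induction e using Sym2.ind with
    | _ a b => exact ⟨a, he.2 a (Sym2.mem_mk_left a b)⟩
  have hS0 : 0 < S.card := Finset.card_pos.mpr hSne
  have hS0Q : (0 : ℚ) < (S.card : ℚ) := by exact_mod_cast hS0
  refine ⟨S, hSi, ?_, ?_, ?_⟩
  · -- cardinality bound
    have hmz : (m : ℤ) = ⌈x / 2⌉ := Int.natCast_ceil_eq_ceil (by positivity)
    have hceil : ⌈x / 2⌉ ≤ ⌈x⌉ := Int.ceil_le_ceil (by linarith)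
    have : (S.card : ℤ) ≤ 2 * (m : ℤ) := by exact_mod_cast hScard
    omega
  · -- score bound
    rw [score, dif_neg hT0]
    apply Finset.le_inf'
    intro i _
    have h1 : (1 : ℚ) ≤ ((edgesIn (G i) S).card : ℚ) := by
      exact_mod_cast Finset.card_pos.mpr (hSi i)
    exact div_le_div_of_nonneg_right h1 hS0Q.le |>.trans_eq rfl
  · -- final bound
    have hS0R : (0 : ℝ) < (S.card : ℝ) := by exact_mod_cast hS0
    have hSxR : (S.card : ℝ) ≤ 2 * x := by
      have : (S.card : ℝ) ≤ 2 * (m : ℝ) := by exact_mod_cast hScard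
      linarith
    have hdx : ((d : ℚ) : ℝ) * x = (k : ℝ) * Real.log T := by
      rw [hxdef]; field_simp
    rw [div_le_div_iff₀ (by positivity) hS0R]
    nlinarith [hSxR, hdR, hdx]

end
end

section
/- Suppose T ≥ 2 and K ⊆ V is a nonempty set with score(K) = d > 0. Then at least one of the following holds: (a) score(V) ≥ d / √(2 n ln T); or (b) there exists a set S ⊆ V covering every frame (so that score(S) ≥ 1/|S|) with |S| ≤ √(2 n ln T) / d. In particular the better of the solution V and the smallest frame-covering set is an O(√(n log T))-approximation for DCS-MA. -/
open scoped Classical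

noncomputable section

/-- Greedy set cover: if every frame `i ∈ α` has at least `μ` candidate elements inside a
pool of `P` elements, then `g` picks suffice to hit every frame, provided
`|α| * (1 - μ/P)^g < 1`. -/
lemma greedy_cover {I E : Type*} [DecidableEq E] (F : I → Finset E) (Pool : Finset E) (μ : ℚ)
    (hμ : 0 < μ) :
    ∀ g : ℕ, ∀ α : Finset I, (∀ i ∈ α, F i ⊆ Pool ∧ μ ≤ ((F i).card : ℚ)) →
      (α.card : ℚ) * (1 - μ / Pool.card) ^ g < 1 →
      ∃ C : Finset E, C ⊆ Pool ∧ C.card ≤ g ∧ ∀ i ∈ α, ∃ e ∈ C, e ∈ F i := by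
  intro g
  induction g with
  | zero =>
    intro α hα hlt
    rw [pow_zero, mul_one] at hlt
    have : α.card = 0 := by exact_mod_cast Nat.lt_one_iff.mp (by exact_mod_cast hlt)
    refine ⟨∅, Finset.empty_subset _, le_rfl, ?_⟩
    intro i hi
    simp [Finset.card_eq_zero.mp this] at hi
  | succ g ih =>
    intro α hα hlt
    rcases α.eq_empty_or_nonempty with rfl | hne
    · exact ⟨∅, Finset.empty_subset _, Nat.zero_le _, by simp⟩
    obtain ⟨i₀, hi₀⟩ := hne
    have hF0 : F i₀ ⊆ Pool := (hα i₀ hi₀).1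
    have hF0c : μ ≤ ((F i₀).card : ℚ) := (hα i₀ hi₀).2
    have hF0ne : (F i₀).Nonempty :=
      Finset.card_pos.mp (by exact_mod_cast hμ.trans_le hF0c)
    have hPoolne : Pool.Nonempty := hF0ne.mono hF0
    have hP0 : (0:ℚ) < Pool.card := by exact_mod_cast Finset.card_pos.mpr hPoolne
    have hsum : ∑ e ∈ Pool, ((α.filter fun i => e ∈ F i).card) = ∑ i ∈ α, (F i).card := by
      calc ∑ e ∈ Pool, (α.filter fun i => e ∈ F i).card
          = ∑ e ∈ Pool, ∑ i ∈ α, if e ∈ F i then 1 else 0 := by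
            simp only [Finset.card_filter]
        _ = ∑ i ∈ α, ∑ e ∈ Pool, if e ∈ F i then 1 else 0 := Finset.sum_comm
        _ = ∑ i ∈ α, (Pool.filter fun e => e ∈ F i).card := by
            simp only [Finset.card_filter]
        _ = ∑ i ∈ α, (F i).card := by
            refine Finset.sum_congr rfl fun i hi => ?_
            rw [Finset.filter_mem_eq_inter, Finset.inter_eq_right.mpr (hα i hi).1]
    have hsumQ : (α.card : ℚ) * μ ≤ ∑ e ∈ Pool, ((α.filter fun i => e ∈ F i).card : ℚ) := by
      have h1 : ∑ e ∈ Pool, ((α.filter fun i => e ∈ F i).card : ℚ)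
          = ∑ i ∈ α, ((F i).card : ℚ) := by exact_mod_cast congrArg (Nat.cast : ℕ → ℚ) hsum
      rw [h1]
      calc (α.card : ℚ) * μ = ∑ _i ∈ α, μ := by rw [Finset.sum_const, nsmul_eq_mul]
        _ ≤ ∑ i ∈ α, ((F i).card : ℚ) := Finset.sum_le_sum fun i hi => (hα i hi).2
    have hpig : ∃ e ∈ Pool,
        (α.card : ℚ) * μ / Pool.card ≤ ((α.filter fun i => e ∈ F i).card : ℚ) := by
      by_contra hno
      push_neg at hno
      have hlt2 : ∑ e ∈ Pool, ((α.filter fun i => e ∈ F i).card : ℚ)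
          < ∑ _e ∈ Pool, (α.card : ℚ) * μ / Pool.card :=
        Finset.sum_lt_sum_of_nonempty hPoolne hno
      rw [Finset.sum_const, nsmul_eq_mul] at hlt2
      have hPc : (Pool.card:ℚ) * ((α.card:ℚ) * μ / (Pool.card:ℚ)) = (α.card:ℚ) * μ := by
        field_simp
      rw [hPc] at hlt2
      linarith
    obtain ⟨e, hePool, hecount⟩ := hpig
    set α' := α.filter fun i => e ∉ F i with hα'
    have hsplit : (α.filter fun i => e ∈ F i).card + α'.card = α.card :=
      Finset.card_filter_add_card_filter_not _
    have hr0 : (0:ℚ) ≤ 1 - μ / Pool.card := by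
      have h2 : μ ≤ (Pool.card : ℚ) := hF0c.trans (by exact_mod_cast Finset.card_le_card hF0)
      have := div_le_one_of_le₀ h2 (le_of_lt hP0)
      linarith
    have hα'card : (α'.card : ℚ) ≤ (α.card : ℚ) * (1 - μ / Pool.card) := by
      have h1 : (α'.card : ℚ) = (α.card : ℚ) - ((α.filter fun i => e ∈ F i).card : ℚ) := by
        have := congrArg (Nat.cast : ℕ → ℚ) hsplit
        push_cast at this
        linarith
      rw [h1, mul_sub, mul_one]
      have h2 : (α.card : ℚ) * (μ / Pool.card) = (α.card : ℚ) * μ / Pool.card := by ring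
      rw [h2]
      linarith
    have hrec : (α'.card : ℚ) * (1 - μ / Pool.card) ^ g < 1 := by
      calc (α'.card : ℚ) * (1 - μ / Pool.card) ^ g
          ≤ ((α.card : ℚ) * (1 - μ / Pool.card)) * (1 - μ / Pool.card) ^ g :=
            mul_le_mul_of_nonneg_right hα'card (pow_nonneg hr0 g)
        _ = (α.card : ℚ) * (1 - μ / Pool.card) ^ (g + 1) := by ring
        _ < 1 := hlt
    obtain ⟨C', hC'sub, hC'card, hC'cov⟩ :=
      ih α' (fun i hi => hα i (Finset.filter_subset _ _ hi)) hrec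
    refine ⟨insert e C', Finset.insert_subset hePool hC'sub,
      (Finset.card_insert_le _ _).trans (Nat.succ_le_succ hC'card), ?_⟩
    intro i hi
    by_cases hei : e ∈ F i
    · exact ⟨e, Finset.mem_insert_self _ _, hei⟩
    · obtain ⟨e', he'C, he'F⟩ := hC'cov i (Finset.mem_filter.mpr ⟨hi, hei⟩)
      exact ⟨e', Finset.mem_insert_of_mem he'C, he'F⟩

/-- The pool of non-diagonal `Sym2` elements with both coordinates in `K` has at most
`|K| (|K|-1) / 2` elements. -/
lemma pool_card_le {V : Type*} [DecidableEq V] (K : Finset V) :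
    ((K.sym2.filter fun e => ¬ e.IsDiag).card : ℚ)
      ≤ (K.card : ℚ) * ((K.card : ℚ) - 1) / 2 := by
  have hdiag : K.sym2.filter (fun e => e.IsDiag) = K.image Sym2.diag := by
    ext z
    simp only [Finset.mem_filter, Finset.mem_image]
    constructor
    · rintro ⟨hz, hdz⟩
      obtain ⟨a, rfl⟩ := (⟨_, Sym2.diag_diagElem hdz⟩ : ∃ a, Sym2.diag a = z)
      refine ⟨a, ?_, rfl⟩
      have := (Finset.mem_sym2_iff.mp hz) a
      simp only [Sym2.diag] at this
      exact this (by simp)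
    · rintro ⟨a, ha, rfl⟩
      refine ⟨?_, Sym2.diag_isDiag a⟩
      rw [Finset.mem_sym2_iff]
      intro y hy
      simp only [Sym2.diag, Sym2.mem_iff] at hy
      rcases hy with rfl | rfl <;> exact ha
  have hsplit := Finset.card_filter_add_card_filter_not
      (s := K.sym2) (p := fun e => e.IsDiag)
  rw [hdiag, Finset.card_image_of_injective _ Sym2.diag_injective, Finset.card_sym2] at hsplit
  have hc : ((K.card + 1).choose 2 : ℚ) = (K.card + 1) * K.card / 2 := by
    rw [Nat.cast_choose_two]
    push_cast
    ring
  have hcast := congrArg (Nat.cast : ℕ → ℚ) hsplit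
  push_cast at hcast
  rw [hc] at hcast
  linarith

lemma two_le_card_of_edgesIn {V : Type*} [Fintype V] {G : SimpleGraph V} {K : Finset V}
    {e : Sym2 V} (he : e ∈ edgesIn G K) : 2 ≤ K.card := by
  induction e using Sym2.ind with
  | _ a b =>
    rw [edgesIn, Finset.mem_filter] at he
    obtain ⟨-, hEdge, hmem⟩ := he
    have hab : a ≠ b := G.ne_of_adj ((SimpleGraph.mem_edgeSet G).mp hEdge)
    exact Finset.one_lt_card.mpr
      ⟨a, hmem a (Sym2.mem_mk_left a b), b, hmem b (Sym2.mem_mk_right a b), hab⟩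

set_option maxHeartbeats 1000000 in
/-- if `T ≥ 2` and `K` is nonempty with `score(K) = d > 0`, then either
(a) `score(V) ≥ d / √(2 n ln T)`, or (b) there is a set `S` covering every frame
(hence `score(S) ≥ 1/|S|`) with `|S| ≤ √(2 n ln T) / d`.  In particular the better of
the solution `V` and the smallest frame-covering set is an `O(√(n log T))`-approximation
for DCS-MA. -/
theorem stmt3 {V : Type*} [Fintype V] {T : ℕ} (hT : 2 ≤ T)
    (G : Fin T → SimpleGraph V) (K : Finset V) (hK : K.Nonempty)
    (d : ℚ) (hd : score G K = d) (hdpos : 0 < d) :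
    (d : ℝ) / Real.sqrt (2 * (Fintype.card V : ℝ) * Real.log T) ≤
        ((score G Finset.univ : ℚ) : ℝ) ∨
    ∃ S : Finset V,
      (∀ i, (edgesIn (G i) S).Nonempty) ∧
      (1 : ℚ) / S.card ≤ score G S ∧
      (S.card : ℝ) ≤ Real.sqrt (2 * (Fintype.card V : ℝ) * Real.log T) / (d : ℝ) := by
  classical
  have hT0 : T ≠ 0 := by omega
  have hT1 : (1:ℝ) < T := by exact_mod_cast by omega
  have hTposR : (0:ℝ) < T := by linarith
  set n := Fintype.card V with hn
  set k := K.card with hk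
  have hkpos : 0 < k := Finset.card_pos.mpr hK
  have hkQ : (0:ℚ) < k := by exact_mod_cast hkpos
  -- every frame has at least d*k edges inside K
  have hdle : ∀ i : Fin T, d * k ≤ ((edgesIn (G i) K).card : ℚ) := by
    intro i
    have h1 : d ≤ ((edgesIn (G i) K).card : ℚ) / k := by
      rw [← hd]
      unfold score
      rw [dif_neg hT0]
      exact Finset.inf'_le _ (Finset.mem_univ i)
    calc d * k ≤ (((edgesIn (G i) K).card : ℚ) / k) * k :=
          mul_le_mul_of_nonneg_right h1 (le_of_lt hkQ)
      _ = ((edgesIn (G i) K).card : ℚ) := by field_simp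
  have hone : ∀ i : Fin T, (edgesIn (G i) K).Nonempty := by
    intro i
    apply Finset.card_pos.mp
    have : (0:ℚ) < ((edgesIn (G i) K).card : ℚ) := lt_of_lt_of_le (by positivity) (hdle i)
    exact_mod_cast this
  have i0 : Fin T := ⟨0, by omega⟩
  have hk2 : 2 ≤ k := two_le_card_of_edgesIn (hone i0).choose_spec
  have hkR : (2:ℝ) ≤ k := by exact_mod_cast hk2
  have hkn : k ≤ n := by rw [hn, hk]; exact Finset.card_le_univ K
  have hnpos : 0 < n := lt_of_lt_of_le hkpos hkn
  have hnR : (0:ℝ) < n := by exact_mod_cast hnpos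
  have hlogT : (0:ℝ) < Real.log T := Real.log_pos hT1
  have hdR : (0:ℝ) < (d:ℝ) := by exact_mod_cast hdpos
  set L := Real.sqrt (2 * (n:ℝ) * Real.log T) with hL
  have hLpos : 0 < L := Real.sqrt_pos.mpr (by positivity)
  have hL2 : L ^ 2 = 2 * (n:ℝ) * Real.log T := Real.sq_sqrt (by positivity)
  by_cases hA : (d : ℝ) / L ≤ ((score G (Finset.univ : Finset V) : ℚ) : ℝ)
  · exact Or.inl hA
  right
  push_neg at hA
  -- find the frame attaining the minimum on V
  obtain ⟨i₁, -, hi₁⟩ : ∃ i ∈ (Finset.univ : Finset (Fin T)),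
      score G (Finset.univ : Finset V)
        = ((edgesIn (G i) (Finset.univ : Finset V)).card : ℚ)
          / (Finset.univ : Finset V).card := by
    unfold score
    rw [dif_neg hT0]
    exact Finset.exists_mem_eq_inf' _ _
  have hsub : edgesIn (G i₁) K ⊆ edgesIn (G i₁) (Finset.univ : Finset V) := by
    intro e he
    rw [edgesIn, Finset.mem_filter] at he ⊢
    exact ⟨he.1, he.2.1, fun v _ => Finset.mem_univ v⟩
  have hA' : ((edgesIn (G i₁) (Finset.univ : Finset V)).card : ℝ) / n < (d:ℝ) / L := by
    rw [hi₁] at hA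
    rw [Finset.card_univ, ← hn] at hA
    push_cast at hA
    exact hA
  have hcardle : (d:ℝ) * k ≤ ((edgesIn (G i₁) (Finset.univ : Finset V)).card : ℝ) := by
    have h1 := (hdle i₁).trans
      (by exact_mod_cast Finset.card_le_card hsub :
        ((edgesIn (G i₁) K).card : ℚ) ≤ ((edgesIn (G i₁) (Finset.univ : Finset V)).card : ℚ))
    exact_mod_cast h1
  have hLk : L * k < n := by
    have h1 : (d:ℝ) * k / n < (d:ℝ) / L :=
      lt_of_le_of_lt (by gcongr) hA'
    rw [div_lt_div_iff₀ hnR hLpos] at h1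
    nlinarith
  have hL2k : 2 * (k:ℝ) * Real.log T < L := by
    nlinarith [mul_pos hlogT (sub_pos.mpr hLk)]
  -- setting up the greedy cover
  set Pool := K.sym2.filter (fun e => ¬ e.IsDiag) with hPool
  have hFP : ∀ i : Fin T, edgesIn (G i) K ⊆ Pool := by
    intro i e he
    rw [edgesIn, Finset.mem_filter] at he
    rw [hPool, Finset.mem_filter]
    exact ⟨Finset.mem_sym2_iff.mpr he.2.2, (G i).not_isDiag_of_mem_edgeSet he.2.1⟩
  have hPle : (Pool.card : ℚ) ≤ (k:ℚ) * ((k:ℚ) - 1) / 2 := pool_card_le K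
  have hPpos : (0:ℚ) < Pool.card := by
    have := Finset.card_pos.mpr ((hone i0).mono (hFP i0))
    exact_mod_cast this
  have hdkP : d * k ≤ (Pool.card : ℚ) :=
    (hdle i0).trans (by exact_mod_cast Finset.card_le_card (hFP i0))
  have h2d : 2 * d ≤ (k:ℚ) - 1 := by nlinarith
  have h2dR : 2 * (d:ℝ) ≤ (k:ℝ) - 1 := by exact_mod_cast h2d
  set x := ((k:ℝ) - 1) * Real.log T / (2 * (d:ℝ)) with hx
  set g := ⌊x⌋₊ + 1 with hg
  have hx0 : 0 ≤ x := by
    apply div_nonneg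
    · apply mul_nonneg (by linarith) (le_of_lt hlogT)
    · linarith
  have hgx : x < (g:ℝ) := by
    rw [hg]
    push_cast
    exact Nat.lt_floor_add_one x
  have hgle : (g:ℝ) ≤ x + 1 := by
    rw [hg]
    push_cast
    have := Nat.floor_le hx0
    linarith
  -- the key exponential estimate
  have hkey : (T:ℝ) * (1 - 2 * (d:ℝ) / ((k:ℝ) - 1)) ^ g < 1 := by
    set t := 2 * (d:ℝ) / ((k:ℝ) - 1) with ht
    have hk1 : (0:ℝ) < (k:ℝ) - 1 := by linarith
    have ht0 : 0 < t := by positivity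
    have hρ0 : (0:ℝ) ≤ 1 - t := by
      have : t ≤ 1 := by rw [ht, div_le_one hk1]; linarith
      linarith
    have hρexp : 1 - t ≤ Real.exp (-t) := by
      have := Real.add_one_le_exp (-t)
      linarith
    have hpow : (1 - t) ^ g ≤ Real.exp (-t) ^ g := pow_le_pow_left₀ hρ0 hρexp g
    have hexp : Real.exp (-t) ^ g = Real.exp ((g:ℝ) * (-t)) := by
      rw [← Real.exp_nat_mul]
    have htx : t * x = Real.log T := by
      rw [ht, hx]
      field_simp
    have htg : Real.log T < t * g := by
      calc Real.log T = t * x := htx.symm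
        _ < t * g := by exact mul_lt_mul_of_pos_left hgx ht0
    have hlt1 : Real.exp ((g:ℝ) * (-t)) < (T:ℝ)⁻¹ := by
      rw [← Real.exp_log hTposR, ← Real.exp_neg]
      apply Real.exp_lt_exp.mpr
      have hcomm : (g:ℝ) * (-t) = -(t * (g:ℝ)) := by ring
      rw [hcomm]
      linarith
    calc (T:ℝ) * (1 - t) ^ g ≤ (T:ℝ) * Real.exp ((g:ℝ) * (-t)) := by
          rw [← hexp]; exact mul_le_mul_of_nonneg_left hpow (le_of_lt hTposR)
      _ < (T:ℝ) * (T:ℝ)⁻¹ := mul_lt_mul_of_pos_left hlt1 hTposR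
      _ = 1 := mul_inv_cancel₀ (ne_of_gt hTposR)
  -- transfer to ℚ and apply greedy covering
  have hratio0 : (0:ℚ) ≤ 1 - d * k / Pool.card := by
    have := div_le_one_of_le₀ hdkP (le_of_lt hPpos)
    linarith
  have hratiole : 1 - d * k / (Pool.card:ℚ) ≤ 1 - 2 * d / ((k:ℚ) - 1) := by
    have hk1Q : (0:ℚ) < (k:ℚ) - 1 := by
      have : (2:ℚ) ≤ k := by exact_mod_cast hk2
      linarith
    have h1 : 2 * d / ((k:ℚ) - 1) ≤ d * k / (Pool.card:ℚ) := by
      rw [div_le_div_iff₀ hk1Q hPpos]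
      nlinarith
    linarith
  have hgreedyhyp : (((Finset.univ : Finset (Fin T))).card : ℚ)
      * (1 - d * k / Pool.card) ^ g < 1 := by
    rw [Finset.card_univ, Fintype.card_fin]
    have hTQ : (0:ℚ) ≤ (T:ℚ) := by positivity
    calc (T:ℚ) * (1 - d * k / Pool.card) ^ g
        ≤ (T:ℚ) * (1 - 2 * d / ((k:ℚ) - 1)) ^ g :=
          mul_le_mul_of_nonneg_left (pow_le_pow_left₀ hratio0 hratiole g) hTQ
      _ < 1 := by
          have h2 : (((T:ℚ) * (1 - 2 * d / ((k:ℚ) - 1)) ^ g : ℚ) : ℝ)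
              = (T:ℝ) * (1 - 2 * (d:ℝ) / ((k:ℝ) - 1)) ^ g := by push_cast; ring
          have := hkey
          rw [← h2] at this
          exact_mod_cast this
  obtain ⟨C, hCP, hCg, hCcov⟩ :=
    greedy_cover (fun i => edgesIn (G i) K) Pool (d * k) (by positivity) g
      Finset.univ (fun i _ => ⟨hFP i, hdle i⟩) hgreedyhyp
  -- the covering vertex set
  set S := Finset.univ.filter (fun v => ∃ e ∈ C, v ∈ e) with hS
  have hScover : ∀ i : Fin T, (edgesIn (G i) S).Nonempty := by
    intro i
    obtain ⟨e, heC, heF⟩ := hCcov i (Finset.mem_univ i)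
    rw [edgesIn, Finset.mem_filter] at heF
    refine ⟨e, ?_⟩
    rw [edgesIn, Finset.mem_filter]
    refine ⟨Finset.mem_univ _, heF.2.1, fun v hv => ?_⟩
    rw [hS, Finset.mem_filter]
    exact ⟨Finset.mem_univ _, e, heC, hv⟩
  have hSne : S.Nonempty := by
    obtain ⟨e, he⟩ := hScover i0
    rw [edgesIn, Finset.mem_filter] at he
    exact ⟨e.out.1, he.2.2 e.out.1 (Sym2.out_fst_mem e)⟩
  have hSpos : (0:ℚ) < S.card := by exact_mod_cast Finset.card_pos.mpr hSne
  have hSscore : (1:ℚ) / S.card ≤ score G S := by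
    unfold score
    rw [dif_neg hT0]
    apply Finset.le_inf'
    intro i _
    have h1 : (1:ℚ) ≤ ((edgesIn (G i) S).card : ℚ) := by
      exact_mod_cast Finset.card_pos.mpr (hScover i)
    gcongr
  have hS2C : S.card ≤ 2 * C.card := by
    have hsub2 : S ⊆ C.biUnion fun e => Finset.univ.filter (· ∈ e) := by
      intro v hv
      rw [hS, Finset.mem_filter] at hv
      obtain ⟨-, e, heC, hve⟩ := hv
      exact Finset.mem_biUnion.mpr ⟨e, heC, Finset.mem_filter.mpr ⟨Finset.mem_univ _, hve⟩⟩
    calc S.card ≤ (C.biUnion fun e => Finset.univ.filter (· ∈ e)).card :=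
          Finset.card_le_card hsub2
      _ ≤ ∑ e ∈ C, (Finset.univ.filter (· ∈ e)).card := Finset.card_biUnion_le
      _ ≤ ∑ _e ∈ C, 2 := by
          apply Finset.sum_le_sum
          intro e _
          induction e using Sym2.ind with
          | _ a b =>
            have hss : Finset.univ.filter (· ∈ s(a, b)) ⊆ {a, b} := by
              intro v hv
              rw [Finset.mem_filter] at hv
              rcases Sym2.mem_iff.mp hv.2 with rfl | rfl
              · exact Finset.mem_insert_self _ _
              · exact Finset.mem_insert_of_mem (Finset.mem_singleton_self _)
            calc (Finset.univ.filter (· ∈ s(a, b))).card ≤ ({a, b} : Finset V).card :=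
                  Finset.card_le_card hss
              _ ≤ 2 := Finset.card_insert_le a {b} |>.trans (by simp)
      _ = 2 * C.card := by rw [Finset.sum_const, smul_eq_mul, mul_comm]
  have hScard : (S.card : ℝ) ≤ 2 * g := by
    have : S.card ≤ 2 * g := hS2C.trans (by omega)
    exact_mod_cast this
  refine ⟨S, hScover, hSscore, ?_⟩
  by_cases hc : 2 * (d:ℝ) ≤ ((k:ℝ) + 1) * Real.log T
  · -- main case
    have h2x : 2 * x = ((k:ℝ) - 1) * Real.log T / (d:ℝ) := by
      rw [hx]; field_simp
    have hnum : ((k:ℝ) - 1) * Real.log T + 2 * (d:ℝ) ≤ L := by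
      nlinarith
    have hfin : 2 * (g:ℝ) ≤ L / (d:ℝ) := by
      rw [le_div_iff₀ hdR]
      have : 2 * (g:ℝ) ≤ 2 * x + 2 := by linarith
      calc 2 * (g:ℝ) * d ≤ (2 * x + 2) * d := by nlinarith
        _ = ((k:ℝ) - 1) * Real.log T + 2 * (d:ℝ) := by
            rw [h2x]; field_simp
        _ ≤ L := hnum
    linarith [hScard]
  · push_neg at hc
    have hx1 : x < 1 := by
      rw [hx, div_lt_one (by positivity)]
      nlinarith
    have hg1 : g = 1 := by
      rw [hg, Nat.floor_eq_zero.mpr hx1]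
    have h2dL : 2 * (d:ℝ) ≤ L := by
      have hhalf : (1:ℝ)/2 < Real.log T := by
        have h2T : Real.log 2 ≤ Real.log T := by
          apply Real.log_le_log (by norm_num)
          exact_mod_cast hT
        linarith [Real.log_two_gt_d9]
      nlinarith
    have : (S.card : ℝ) ≤ 2 := by
      rw [hg1] at hScard
      push_cast at hScard
      linarith
    calc (S.card : ℝ) ≤ 2 := this
      _ ≤ L / (d:ℝ) := by rw [le_div_iff₀ hdR]; linarith
end
end

section
/- Let V be partitioned into parts S_1, …, S_r, each of size at most p, and let K ⊆ V be nonempty with score(K) > 0. Let S be the union of those parts S_j that intersect K. Then K ⊆ S, |S| ≤ p · |K|, and score(S) ≥ score(K) · |K| / |S| ≥ score(K) / p. -/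
open scoped Classical

noncomputable section

/-- if `V` is partitioned into parts `P 1, …, P r`, each of size at most `p`,
`K` is nonempty with `score(K) > 0`, and `S` is the union of the parts meeting `K`, then
`K ⊆ S`, `|S| ≤ p·|K|`, and `score(S) ≥ score(K)·|K|/|S| ≥ score(K)/p`. -/
theorem stmt4 {V : Type*} [Fintype V] {T r : ℕ} (G : Fin T → SimpleGraph V)
    (P : Fin r → Finset V) (p : ℕ)
    (hdisj : ∀ j1 j2, j1 ≠ j2 → Disjoint (P j1) (P j2))
    (hcover : Finset.univ.biUnion P = Finset.univ)
    (hsize : ∀ j, (P j).card ≤ p)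
    (K : Finset V) (hK : K.Nonempty) (hscore : 0 < score G K) :
    let S := (Finset.univ.filter (fun j => ((P j) ∩ K).Nonempty)).biUnion P
    K ⊆ S ∧ S.card ≤ p * K.card ∧
      score G K * (K.card : ℚ) / (S.card : ℚ) ≤ score G S ∧
      score G K / (p : ℚ) ≤ score G K * (K.card : ℚ) / (S.card : ℚ) := by
  intro S
  have hT : T ≠ 0 := by
    intro h
    rw [score, dif_pos h] at hscore
    exact lt_irrefl 0 hscore
  -- existence of part containing any v
  have hpart : ∀ v : V, ∃ j, v ∈ P j := by
    intro v
    have : v ∈ Finset.univ.biUnion P := by rw [hcover]; exact Finset.mem_univ v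
    simpa using this
  have hKS : K ⊆ S := by
    intro v hv
    obtain ⟨j, hj⟩ := hpart v
    exact Finset.mem_biUnion.mpr ⟨j, Finset.mem_filter.mpr ⟨Finset.mem_univ j,
      ⟨v, Finset.mem_inter.mpr ⟨hj, hv⟩⟩⟩, hj⟩
  -- card bound
  set J := Finset.univ.filter (fun j => ((P j) ∩ K).Nonempty) with hJ
  have hcardJ : J.card ≤ K.card := by
    classical
    have : J ⊆ K.image (fun v => (hpart v).choose) := by
      intro j hj
      obtain ⟨v, hv⟩ := (Finset.mem_filter.mp hj).2
      obtain ⟨hvP, hvK⟩ := Finset.mem_inter.mp hv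
      have : (hpart v).choose = j := by
        by_contra hne
        exact Finset.disjoint_left.mp (hdisj _ _ hne) (hpart v).choose_spec hvP
      exact Finset.mem_image.mpr ⟨v, hvK, this⟩
    calc J.card ≤ (K.image (fun v => (hpart v).choose)).card := Finset.card_le_card this
      _ ≤ K.card := Finset.card_image_le
  have hScard : S.card ≤ p * K.card := by
    have h1 : S.card ≤ ∑ j ∈ J, (P j).card := Finset.card_biUnion_le
    have h2 : ∑ j ∈ J, (P j).card ≤ ∑ _j ∈ J, p := Finset.sum_le_sum (fun j _ => hsize j)
    simp only [Finset.sum_const, smul_eq_mul] at h2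
    calc S.card ≤ J.card * p := h1.trans h2
      _ ≤ K.card * p := Nat.mul_le_mul_right p hcardJ
      _ = p * K.card := Nat.mul_comm _ _
  have hSne : S.Nonempty := hK.mono hKS
  have hKpos : (0:ℚ) < K.card := by exact_mod_cast hK.card_pos
  have hSpos : (0:ℚ) < S.card := by exact_mod_cast hSne.card_pos
  have hp0 : 0 < p := by
    rcases Nat.eq_zero_or_pos p with h | h
    · exfalso; rw [h, zero_mul] at hScard
      exact absurd (Nat.le_zero.mp hScard) hSne.card_pos.ne'
    · exact h
  have hppos : (0:ℚ) < p := by exact_mod_cast hp0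
  -- edges monotone
  have hedges : ∀ i, (edgesIn (G i) K) ⊆ (edgesIn (G i) S) := by
    intro i e he
    rw [edgesIn, Finset.mem_filter] at he ⊢
    exact ⟨he.1, he.2.1, fun v hv => hKS (he.2.2 v hv)⟩
  have hnel : (Finset.univ : Finset (Fin T)).Nonempty :=
    Finset.univ_nonempty_iff.mpr (Fin.pos_iff_nonempty.mp (Nat.pos_of_ne_zero hT))
  have hscoreK : ∀ i : Fin T, score G K ≤ ((edgesIn (G i) K).card : ℚ) / K.card := by
    intro i
    rw [score, dif_neg hT]
    exact Finset.inf'_le _ (Finset.mem_univ i)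
  have main : score G K * (K.card : ℚ) / (S.card : ℚ) ≤ score G S := by
    conv_rhs => rw [score, dif_neg hT]
    apply Finset.le_inf'
    intro i _
    have h1 : score G K * (K.card : ℚ) ≤ (edgesIn (G i) K).card := by
      have := hscoreK i
      calc score G K * (K.card : ℚ) ≤ ((edgesIn (G i) K).card / K.card) * K.card :=
            mul_le_mul_of_nonneg_right this hKpos.le
        _ = (edgesIn (G i) K).card := div_mul_cancel₀ _ hKpos.ne'
    have h2 : ((edgesIn (G i) K).card : ℚ) ≤ (edgesIn (G i) S).card := by
      exact_mod_cast Finset.card_le_card (hedges i)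
    exact (div_le_div_iff_of_pos_right hSpos).mpr (h1.trans h2)
  refine ⟨hKS, hScard, main, ?_⟩
  have hScardQ : (S.card : ℚ) ≤ p * K.card := by exact_mod_cast hScard
  rw [div_le_div_iff₀ hppos hSpos]
  calc score G K * S.card ≤ score G K * (p * K.card) :=
        mul_le_mul_of_nonneg_left hScardQ hscore.le
    _ = score G K * K.card * p := by ring


end
end

section
/- Suppose n ≥ 2, T ≥ 2, and let K ⊆ V be nonempty with |K| = k and score(K) = d > 0. Let S_1, …, S_r be a partition of V into r = 2⌈ln T⌉ parts each of size at most n / (2 ln T). Then at least one of the following holds: (a) score(V) ≥ d · n^{−2/3}; (b) there exists a set S ⊆ V covering every frame with 1/|S| ≥ d · n^{−2/3}; or (c) the union S of the parts S_j intersecting K satisfies score(S) ≥ d · n^{−2/3}. (This is the structural content of the n^{2/3}-approximation algorithm for DCS-MA.) -/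
open scoped Classical

noncomputable section

lemma edgesIn_subset_of_subset {V : Type*} [Fintype V] (G : SimpleGraph V) {S S' : Finset V}
    (h : S ⊆ S') : edgesIn G S ⊆ edgesIn G S' := by
  intro e he
  simp only [edgesIn, Finset.mem_filter] at he ⊢
  exact ⟨he.1, he.2.1, fun v hv => h (he.2.2 v hv)⟩

lemma card_edgesIn_le {V : Type*} [Fintype V] (G : SimpleGraph V) (K : Finset V) :
    (edgesIn G K).card ≤ K.card ^ 2 := by
  have hsub : edgesIn G K ⊆ (K ×ˢ K).image (fun p => Sym2.mk p.1 p.2) := by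
    intro e he
    simp only [edgesIn, Finset.mem_filter] at he
    induction e using Sym2.ind with
    | _ a b =>
      simp only [Finset.mem_image, Finset.mem_product]
      exact ⟨(a, b), ⟨he.2.2 a (by simp), he.2.2 b (by simp)⟩, rfl⟩
  calc (edgesIn G K).card ≤ _ := Finset.card_le_card hsub
    _ ≤ (K ×ˢ K).card := Finset.card_image_le
    _ = K.card ^ 2 := by rw [Finset.card_product, sq]

/-- suppose `n ≥ 2`, `T ≥ 2`, `K` nonempty with `|K| = k` and
`score(K) = d > 0`, and `P 1, …, P r` is a partition of `V` into `r = 2⌈ln T⌉` parts, each of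
size at most `n / (2 ln T)`.  Then at least one of: (a) `score(V) ≥ d·n^{-2/3}`;
(b) there is a set `S` covering every frame with `1/|S| ≥ d·n^{-2/3}`;
(c) the union `S` of the parts meeting `K` satisfies `score(S) ≥ d·n^{-2/3}`. -/
theorem stmt5 {V : Type*} [Fintype V] {T r : ℕ}
    (hn : 2 ≤ Fintype.card V) (hT : 2 ≤ T)
    (G : Fin T → SimpleGraph V)
    (K : Finset V) (hK : K.Nonempty) (k : ℕ) (hk : K.card = k)
    (d : ℚ) (hd : score G K = d) (hdpos : 0 < d)
    (P : Fin r → Finset V) (hr : r = 2 * ⌈Real.log T⌉₊)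
    (hdisj : ∀ j1 j2, j1 ≠ j2 → Disjoint (P j1) (P j2))
    (hcover : Finset.univ.biUnion P = Finset.univ)
    (hsize : ∀ j, ((P j).card : ℝ) ≤ (Fintype.card V : ℝ) / (2 * Real.log T)) :
    (d : ℝ) / ((Fintype.card V : ℝ) ^ ((2 : ℝ) / 3)) ≤ ((score G Finset.univ : ℚ) : ℝ) ∨
    (∃ S : Finset V,
      (∀ i, (edgesIn (G i) S).Nonempty) ∧
      (d : ℝ) / ((Fintype.card V : ℝ) ^ ((2 : ℝ) / 3)) ≤ 1 / (S.card : ℝ)) ∨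
    (d : ℝ) / ((Fintype.card V : ℝ) ^ ((2 : ℝ) / 3)) ≤
      ((score G ((Finset.univ.filter (fun j => ((P j) ∩ K).Nonempty)).biUnion P) : ℚ) : ℝ) := by
  have hT0 : T ≠ 0 := by omega
  have i0 : Fin T := ⟨0, by omega⟩
  have hk1 : 0 < k := by rw [← hk]; exact Finset.card_pos.mpr hK
  have hkQ : (0 : ℚ) < (k : ℚ) := by exact_mod_cast hk1
  simp only [score, dif_neg hT0] at hd
  have hle : ∀ i, d ≤ ((edgesIn (G i) K).card : ℚ) / (K.card : ℚ) := by
    intro i; rw [← hd]; exact Finset.inf'_le _ (Finset.mem_univ i)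
  have hdk : ∀ i, d * k ≤ ((edgesIn (G i) K).card : ℚ) := by
    intro i
    have h := hle i
    rw [hk] at h
    exact (le_div_iff₀ hkQ).mp h
  have hne : ∀ i, (edgesIn (G i) K).Nonempty := by
    intro i
    rw [← Finset.card_pos]
    have h0 : (0 : ℚ) < d * k := mul_pos hdpos hkQ
    exact_mod_cast lt_of_lt_of_le h0 (hdk i)
  have hdlek : d ≤ k := by
    have h := hle i0
    have hcard : ((edgesIn (G i0) K).card : ℚ) ≤ (k : ℚ) * k := by
      have h2 := card_edgesIn_le (G i0) K
      rw [hk] at h2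
      rw [← sq]
      exact_mod_cast h2
    rw [hk] at h
    calc d ≤ ((edgesIn (G i0) K).card : ℚ) / k := h
      _ ≤ (k : ℚ) * k / k := by apply div_le_div_of_nonneg_right hcard hkQ.le
      _ = k := by field_simp
  set N := Fintype.card V with hN
  have hNR : (0 : ℝ) < (N : ℝ) := by exact_mod_cast (by omega : 0 < N)
  have hx : (0 : ℝ) < (N : ℝ) ^ ((2 : ℝ) / 3) := Real.rpow_pos_of_pos hNR _
  by_cases hcase : k ^ 3 ≤ N
  · right; left
    refine ⟨K, hne, ?_⟩
    rw [hk]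
    have hkR : (0 : ℝ) < (k : ℝ) := by exact_mod_cast hk1
    rw [div_le_div_iff₀ hx hkR]
    have h3 : ((k : ℝ) ^ 3) ≤ (N : ℝ) := by exact_mod_cast hcase
    have hk2 : (k : ℝ) ^ 2 ≤ (N : ℝ) ^ ((2 : ℝ) / 3) := by
      have h := Real.rpow_le_rpow (by positivity) h3 (by norm_num : (0 : ℝ) ≤ 2 / 3)
      rwa [← Real.rpow_natCast (k : ℝ) 3, ← Real.rpow_mul (by positivity),
        show ((3 : ℕ) : ℝ) * (2 / 3) = ((2 : ℕ) : ℝ) by norm_num,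
        Real.rpow_natCast] at h
    have hdR : (d : ℝ) ≤ (k : ℝ) := by exact_mod_cast hdlek
    nlinarith [hkR, hk2, hdR]
  · right; right
    set S := (Finset.univ.filter (fun j => ((P j) ∩ K).Nonempty)).biUnion P with hS
    have hKS : K ⊆ S := by
      intro v hv
      have hvU : v ∈ Finset.univ.biUnion P := by rw [hcover]; exact Finset.mem_univ v
      obtain ⟨j, -, hj⟩ := Finset.mem_biUnion.mp hvU
      exact Finset.mem_biUnion.mpr ⟨j, Finset.mem_filter.mpr ⟨Finset.mem_univ j,
        ⟨v, Finset.mem_inter.mpr ⟨hj, hv⟩⟩⟩, hj⟩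
    have hScard : 0 < S.card := Finset.card_pos.mpr (hK.mono hKS)
    have hSle : S.card ≤ N := Finset.card_le_univ S
    have hSQ : (0 : ℚ) < (S.card : ℚ) := by exact_mod_cast hScard
    have hq : d * k / S.card ≤ score G S := by
      simp only [score, dif_neg hT0]
      apply Finset.le_inf'
      intro i _
      apply div_le_div_of_nonneg_right ?_ hSQ.le
      refine le_trans (hdk i) ?_
      exact_mod_cast Finset.card_le_card (edgesIn_subset_of_subset (G i) hKS)
    have hqR : ((d * k / S.card : ℚ) : ℝ) ≤ ((score G S : ℚ) : ℝ) := by exact_mod_cast hq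
    refine le_trans ?_ hqR
    push_cast
    have hSR : (0 : ℝ) < (S.card : ℝ) := by exact_mod_cast hScard
    rw [div_le_div_iff₀ hx hSR]
    have hk3 : (N : ℝ) ≤ (k : ℝ) ^ 3 := by exact_mod_cast (le_of_lt (not_le.mp hcase))
    have hkR : (N : ℝ) ^ ((1 : ℝ) / 3) ≤ (k : ℝ) := by
      have h := Real.rpow_le_rpow (le_of_lt hNR) hk3 (by norm_num : (0 : ℝ) ≤ 1 / 3)
      rwa [← Real.rpow_natCast (k : ℝ) 3, ← Real.rpow_mul (by positivity),
        show ((3 : ℕ) : ℝ) * (1 / 3) = 1 by norm_num, Real.rpow_one] at h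
    have hNx : (N : ℝ) ≤ (k : ℝ) * (N : ℝ) ^ ((2 : ℝ) / 3) := by
      have heq : (N : ℝ) = (N : ℝ) ^ ((1 : ℝ) / 3) * (N : ℝ) ^ ((2 : ℝ) / 3) := by
        rw [← Real.rpow_add hNR]; norm_num
      calc (N : ℝ) = (N : ℝ) ^ ((1 : ℝ) / 3) * (N : ℝ) ^ ((2 : ℝ) / 3) := heq
        _ ≤ (k : ℝ) * (N : ℝ) ^ ((2 : ℝ) / 3) :=
            mul_le_mul_of_nonneg_right hkR (le_of_lt hx)
    have hdR : (0 : ℝ) < (d : ℝ) := by exact_mod_cast hdpos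
    have hSN : (S.card : ℝ) ≤ (N : ℝ) := by exact_mod_cast hSle
    nlinarith [mul_le_mul_of_nonneg_left hSN hdR.le, mul_le_mul_of_nonneg_left hNx hdR.le]


end
end

section
/- In the star-sequence instance on n ≥ 2 vertices, every nonempty set S ⊆ V with score(S) > 0 must equal V, and score(V) = 1/n. Hence the optimal integral DCS-MA value of this instance is exactly 1/n. -/
open scoped Classical

noncomputable section

/-- The star-sequence instance on `n` vertices (0-indexed): vertex `v_i` of the paper is
`(i-1 : Fin n)`, and the paper's frame `G_k` (`1 ≤ k ≤ n-1`) is `starFrame n (k-1)`, a star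
centered at vertex `k` (paper's `v_{k+1}`) with leaves `0, …, k-1` (paper's `v_1, …, v_k`). -/
def starFrame (n : ℕ) (j : Fin (n - 1)) : SimpleGraph (Fin n) :=
  SimpleGraph.fromRel (fun x y => (x : ℕ) = (j : ℕ) + 1 ∧ (y : ℕ) ≤ (j : ℕ))

lemma mem_edgesIn_star (n : ℕ) (j : Fin (n-1)) (S : Finset (Fin n)) (x y : Fin n) :
    s(x,y) ∈ edgesIn (starFrame n j) S ↔
      (x ≠ y ∧ ((x:ℕ)=(j:ℕ)+1 ∧ (y:ℕ)≤(j:ℕ) ∨ (y:ℕ)=(j:ℕ)+1 ∧ (x:ℕ)≤(j:ℕ))) ∧ x ∈ S ∧ y ∈ S := by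
  rw [edgesIn]; convert (Finset.mem_filter (s := Finset.univ) (a := s(x,y))).trans ?_ using 0
  simp [starFrame]

lemma score_ne_zero {n : ℕ} (hn : 2 ≤ n) : n - 1 ≠ 0 := by omega

lemma score_star_eq (n : ℕ) (hn : 2 ≤ n) (S : Finset (Fin n)) :
    score (starFrame n) S = Finset.univ.inf'
      (Finset.univ_nonempty_iff.mpr (Fin.pos_iff_nonempty.mp (Nat.pos_of_ne_zero (score_ne_zero hn))))
      (fun i => ((edgesIn (starFrame n i) S).card : ℚ) / S.card) := by
  rw [score, dif_neg (score_ne_zero hn)]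


/-- in the star-sequence instance on `n ≥ 2` vertices, every nonempty set `S`
with `score(S) > 0` must equal `V`, and `score(V) = 1/n`; hence the optimal integral DCS-MA
value of this instance is exactly `1/n`. -/
theorem stmt8 (n : ℕ) (hn : 2 ≤ n) :
    (∀ S : Finset (Fin n), S.Nonempty → 0 < score (starFrame n) S → S = Finset.univ) ∧
    score (starFrame n) Finset.univ = 1 / (n : ℚ) := by
  have hT : n - 1 ≠ 0 := by omega
  have hnpos : (0:ℚ) < (n:ℚ) := by positivity
  -- the center of frame j
  have hjlt : ∀ j : Fin (n-1), (j:ℕ) + 1 < n := fun j => by omega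
  have hcadj : ∀ (j : Fin (n-1)) (S : Finset (Fin n)),
      (edgesIn (starFrame n j) S).Nonempty → (⟨(j:ℕ)+1, hjlt j⟩ : Fin n) ∈ S ∧
        ∃ y : Fin n, (y:ℕ) ≤ (j:ℕ) ∧ y ∈ S := by
    intro j S ⟨e, he⟩
    induction e using Sym2.ind with
    | _ x y =>
      rw [mem_edgesIn_star] at he
      obtain ⟨⟨hxy, h | h⟩, hxS, hyS⟩ := he
      · refine ⟨?_, y, h.2, hyS⟩
        have : x = (⟨(j:ℕ)+1, hjlt j⟩ : Fin n) := Fin.ext h.1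
        rwa [this] at hxS
      · refine ⟨?_, x, h.2, hxS⟩
        have : y = (⟨(j:ℕ)+1, hjlt j⟩ : Fin n) := Fin.ext h.1
        rwa [this] at hyS
  constructor
  · intro S hS hscore
    rw [score_star_eq n hn] at hscore
    have hpos : ∀ j : Fin (n-1), (edgesIn (starFrame n j) S).Nonempty := by
      intro j
      have hle := Finset.inf'_le (f := fun i => ((edgesIn (starFrame n i) S).card : ℚ) / S.card)
        (b := j) (Finset.mem_univ j)
      have : 0 < ((edgesIn (starFrame n j) S).card : ℚ) / S.card := lt_of_lt_of_le hscore hle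
      rw [Finset.card_pos.symm]
      by_contra h
      simp only [not_lt, Nat.le_zero] at h
      rw [h] at this; simp at this
    have hzero : Fin (n-1) := ⟨0, Nat.pos_of_ne_zero hT⟩
    ext v
    simp only [Finset.mem_univ, iff_true]
    by_cases hv : (v:ℕ) = 0
    · obtain ⟨_, y, hy0, hyS⟩ := hcadj ⟨0, Nat.pos_of_ne_zero hT⟩ S (hpos _)
      have hy0' : (y:ℕ) ≤ 0 := hy0
      have : y = v := Fin.ext (by omega)
      rwa [this] at hyS
    · have hvlt : (v:ℕ) - 1 < n - 1 := by omega
      obtain ⟨hc, _⟩ := hcadj ⟨(v:ℕ)-1, hvlt⟩ S (hpos _)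
      have : (⟨((⟨(v:ℕ)-1, hvlt⟩ : Fin (n-1)) : ℕ)+1, hjlt _⟩ : Fin n) = v := Fin.ext (by simp; omega)
      rwa [this] at hc
  · rw [score_star_eq n hn]
    have h1lt : (1:ℕ) < n := by omega
    have hz : Fin (n-1) := ⟨0, Nat.pos_of_ne_zero hT⟩
    -- at j = 0 the edge set is exactly {s(1,0)}
    have hcard0 : edgesIn (starFrame n ⟨0, Nat.pos_of_ne_zero hT⟩) (Finset.univ : Finset (Fin n))
        = {s((⟨1, h1lt⟩ : Fin n), (⟨0, by omega⟩ : Fin n))} := by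
      ext e
      induction e using Sym2.ind with
      | _ x y =>
        rw [mem_edgesIn_star]
        simp only [Finset.mem_univ, and_true, Finset.mem_singleton, Sym2.eq_iff]
        constructor
        · rintro ⟨hxy, h | h⟩
          · left; exact ⟨Fin.ext (by simpa using h.1), Fin.ext (by simpa using Nat.le_zero.mp h.2)⟩
          · right; exact ⟨Fin.ext (by simpa using Nat.le_zero.mp h.2), Fin.ext (by simpa using h.1)⟩
        · rintro (⟨hx, hy⟩ | ⟨hx, hy⟩) <;> subst hx <;> subst hy
          · exact ⟨by simp [Fin.ext_iff], Or.inl ⟨by simp, by simp⟩⟩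
          · exact ⟨by simp [Fin.ext_iff], Or.inr ⟨by simp, by simp⟩⟩
    have hcardU : ((Finset.univ : Finset (Fin n)).card : ℚ) = n := by simp
    apply le_antisymm
    · refine le_trans (Finset.inf'_le _ (Finset.mem_univ (⟨0, Nat.pos_of_ne_zero hT⟩ : Fin (n-1)))) ?_
      rw [hcard0, hcardU]
      simp
    · rw [Finset.le_inf'_iff]
      intro j _
      rw [hcardU]
      have hedge : s((⟨(j:ℕ)+1, hjlt j⟩ : Fin n), (⟨0, by omega⟩ : Fin n)) ∈
          edgesIn (starFrame n j) (Finset.univ : Finset (Fin n)) := by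
        rw [mem_edgesIn_star]
        exact ⟨⟨by simp [Fin.ext_iff], Or.inl ⟨by simp, by simp⟩⟩, Finset.mem_univ _, Finset.mem_univ _⟩
      have h1 : (1:ℚ) ≤ (edgesIn (starFrame n j) (Finset.univ : Finset (Fin n))).card := by
        exact_mod_cast Finset.card_pos.mpr ⟨_, hedge⟩
      gcongr

end
end

section
/- For the star-sequence instance on n ≥ 2 vertices, let h = 1 / (1 + H_{n−1}) where H_{n−1} = Σ_{i=1}^{n−1} 1/i. Then there exists a nonnegative vector y : {1, …, n} → ℝ (namely y_1 = h and y_i = h/(i−1) for i ≥ 2) such that Σ_{i=1}^n y_i = 1 and, for every k ∈ {1, …, n−1}, Σ_{i=1}^{k} min(y_{k+1}, y_i) ≥ h. Hence the DCS_LP relaxation has value at least 1/(1 + H_{n−1}) = Ω(1/log n) on this instance, while its integral optimum is 1/n, giving an integrality gap of Ω(n / log n). -/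
/-- for the star-sequence instance on `n ≥ 2` vertices, with
`h = 1/(1 + H_{n-1})` where `H_{n-1} = Σ_{i=1}^{n-1} 1/i`, there is a nonnegative vector
`y : {1,…,n} → ℝ` (namely `y 1 = h` and `y i = h/(i-1)` for `i ≥ 2`) with `Σ_{i=1}^n y i = 1`
such that for every `k ∈ {1,…,n-1}`, `Σ_{i=1}^k min (y (k+1)) (y i) ≥ h`.  Hence the DCS_LP
relaxation has value at least `1/(1 + H_{n-1}) = Ω(1/log n)` on this instance, while its
integral optimum is `1/n`, giving an integrality gap of `Ω(n/log n)`. -/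
theorem stmt9 (n : ℕ) (hn : 2 ≤ n) :
    ∃ y : ℕ → ℝ,
      y 1 = (1 + ∑ i ∈ Finset.Icc 1 (n - 1), (1 : ℝ) / i)⁻¹ ∧
      (∀ i ∈ Finset.Icc 2 n,
        y i = (1 + ∑ i ∈ Finset.Icc 1 (n - 1), (1 : ℝ) / i)⁻¹ / ((i : ℝ) - 1)) ∧
      (∀ i ∈ Finset.Icc 1 n, 0 ≤ y i) ∧
      (∑ i ∈ Finset.Icc 1 n, y i = 1) ∧
      (∀ k ∈ Finset.Icc 1 (n - 1),
        (1 + ∑ i ∈ Finset.Icc 1 (n - 1), (1 : ℝ) / i)⁻¹ ≤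
          ∑ i ∈ Finset.Icc 1 k, min (y (k + 1)) (y i)) := by
  set H : ℝ := ∑ i ∈ Finset.Icc 1 (n - 1), (1 : ℝ) / i with hHdef
  have hH0 : 0 ≤ H := Finset.sum_nonneg fun i _ => by positivity
  have hpos : (0 : ℝ) < 1 + H := by linarith
  set h : ℝ := (1 + H)⁻¹ with hhdef
  have hh0 : 0 < h := inv_pos.mpr hpos
  refine ⟨fun i : ℕ => if i = 1 then h else h / ((i : ℝ) - 1), if_pos rfl, ?_, ?_, ?_, ?_⟩
  · intro i hi
    simp only [Finset.mem_Icc] at hi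
    have : i ≠ 1 := by omega
    simp [this]
  · intro i hi
    simp only [Finset.mem_Icc] at hi
    by_cases h1 : i = 1
    · simp [h1, hh0.le]
    · have hi2 : 2 ≤ i := by omega
      have : (1 : ℝ) ≤ (i : ℝ) := by exact_mod_cast Nat.one_le_of_lt hi2
      simp only [h1, if_false]
      apply div_nonneg hh0.le
      linarith
  · have hins : Finset.Icc 1 n = insert 1 (Finset.Icc 2 n) := by
      ext i
      simp only [Finset.mem_Icc, Finset.mem_insert]
      omega
    rw [hins, Finset.sum_insert (by simp)]
    simp only [if_pos rfl]
    have key : (∑ i ∈ Finset.Icc 2 n, if i = 1 then h else h / ((i : ℝ) - 1))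
        = ∑ j ∈ Finset.Icc 1 (n - 1), h * (1 / (j : ℝ)) := by
      refine Finset.sum_nbij' (fun i => i - 1) (fun j => j + 1) ?_ ?_ ?_ ?_ ?_
      · intro a ha; simp only [Finset.mem_Icc] at *; omega
      · intro b hb; simp only [Finset.mem_Icc] at *; omega
      · intro a ha; simp only [Finset.mem_Icc] at ha; omega
      · intro b hb; simp only [Finset.mem_Icc] at hb; omega
      · intro a ha
        simp only [Finset.mem_Icc] at ha
        have : a ≠ 1 := by omega
        rw [if_neg this]
        have hc : ((a - 1 : ℕ) : ℝ) = (a : ℝ) - 1 := by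
          have : 1 ≤ a := by omega
          push_cast [this]; ring
        rw [hc]; ring
    rw [key, ← Finset.mul_sum, ← hHdef, hhdef]
    field_simp
    simp only [if_true, mul_one_div_cancel hpos.ne']
  · intro k hk
    simp only [Finset.mem_Icc] at hk
    have hk1 : 1 ≤ k := hk.1
    have hkR : (1 : ℝ) ≤ (k : ℝ) := by exact_mod_cast hk1
    have hk0 : (0 : ℝ) < (k : ℝ) := by linarith
    have hy : (fun i : ℕ => if i = 1 then h else h / ((i : ℝ) - 1)) (k + 1) = h / (k : ℝ) := by
      have : k + 1 ≠ 1 := by omega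
      simp only [this, if_false]
      push_cast
      norm_num
    have hmin : ∀ i ∈ Finset.Icc 1 k,
        min ((fun i : ℕ => if i = 1 then h else h / ((i : ℝ) - 1)) (k + 1))
          ((fun i : ℕ => if i = 1 then h else h / ((i : ℝ) - 1)) i) = h / (k : ℝ) := by
      intro i hi
      simp only [Finset.mem_Icc] at hi
      rw [hy]
      refine min_eq_left ?_
      by_cases h1 : i = 1
      · simp only [h1, if_pos rfl]
        exact div_le_self hh0.le hkR
      · have hi2 : 2 ≤ i := by omega
        simp only [h1, if_false]
        have h1i : (1 : ℝ) ≤ (i : ℝ) - 1 := by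
          have : (2 : ℝ) ≤ (i : ℝ) := by exact_mod_cast hi2
          linarith
        have hik : (i : ℝ) - 1 ≤ (k : ℝ) := by
          have : (i : ℝ) ≤ (k : ℝ) := by exact_mod_cast hi.2
          linarith
        gcongr
    rw [Finset.sum_congr rfl hmin, Finset.sum_const, Nat.card_Icc]
    simp only [Nat.add_sub_cancel, nsmul_eq_mul]
    rw [mul_div_cancel₀ _ (ne_of_gt hk0)]
end

section
/- Let G be a simple graph on vertex set V, and construct one frame G_v for each v ∈ V, where the edge set of G_v is { {v, w} : w ∈ V, w ≠ v, w not adjacent to v in G }. If I ⊆ V is an independent set of G with |I| ≥ 2, then Σ_{v ∈ V} min-deg(G_v[I]) ≥ |I|. -/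
open scoped Classical

noncomputable section

/-- The minimum degree of the subgraph of `H` induced by `S` (0 if `S` is empty). -/
def minDegIn {V : Type*} (H : SimpleGraph V) (S : Finset V) : ℕ :=
  if h : S.Nonempty then S.inf' h (fun v => (S.filter (fun w => H.Adj v w)).card) else 0

/-- Frame `G_v` of the DCS-AM instance constructed from the graph `G`: its edge set is
`{ {v, w} : w ≠ v, w not adjacent to v in G }` (all of `v`'s non-neighbors form a star
centered at `v`, and `v`'s neighbors are singletons). -/
def frameOf {V : Type*} (G : SimpleGraph V) (v : V) : SimpleGraph V :=
  SimpleGraph.fromRel (fun a b => a = v ∧ ¬ G.Adj v b)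

/-- if `I` is an independent set of `G` with `|I| ≥ 2`, then
`Σ_{v ∈ V} min-deg(G_v[I]) ≥ |I|`. -/
theorem stmt10 {V : Type*} [Fintype V] (G : SimpleGraph V) (I : Finset V)
    (hcard : 2 ≤ I.card) (hind : ∀ a ∈ I, ∀ b ∈ I, ¬ G.Adj a b) :
    I.card ≤ ∑ v : V, minDegIn (frameOf G v) I := by
  have key : ∀ v ∈ I, 1 ≤ minDegIn (frameOf G v) I := by
    intro v hv
    have hne : I.Nonempty := ⟨v, hv⟩
    rw [minDegIn, dif_pos hne]
    apply Finset.le_inf'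
    intro w hw
    rw [Nat.succ_le_iff, Finset.card_pos]
    by_cases hwv : w = v
    · obtain ⟨u, hu, huv⟩ : ∃ u ∈ I, u ≠ v := by
        obtain ⟨a, ha, b, hb, hab⟩ := Finset.one_lt_card.mp hcard
        by_cases hav : a = v
        · exact ⟨b, hb, fun h => hab (hav.trans h.symm)⟩
        · exact ⟨a, ha, hav⟩
      refine ⟨u, Finset.mem_filter.mpr ⟨hu, ?_⟩⟩
      subst hwv
      exact SimpleGraph.fromRel_adj .. |>.mpr
        ⟨Ne.symm huv, Or.inl ⟨rfl, hind w hv u hu⟩⟩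
    · refine ⟨v, Finset.mem_filter.mpr ⟨hv, ?_⟩⟩
      exact SimpleGraph.fromRel_adj .. |>.mpr
        ⟨hwv, Or.inr ⟨rfl, hind v hv w hw⟩⟩
  calc I.card = ∑ v ∈ I, 1 := by simp
    _ ≤ ∑ v ∈ I, minDegIn (frameOf G v) I := Finset.sum_le_sum key
    _ ≤ ∑ v : V, minDegIn (frameOf G v) I :=
        Finset.sum_le_sum_of_subset (Finset.subset_univ I)

end
end

section
/- Let G be a simple graph on vertex set V, and construct one frame G_v for each v ∈ V, where the edge set of G_v is { {v, w} : w ∈ V, w ≠ v, w not adjacent to v in G }. Then for every S ⊆ V: (i) min-deg(G_v[S]) ≤ 1 for every v; (ii) the set I_S = { v ∈ V : min-deg(G_v[S]) ≥ 1 } is an independent set of G; and hence (iii) Σ_{v ∈ V} min-deg(G_v[S]) ≤ |I_S| ≤ α(G), the independence number of G. Combined with the forward direction, the optimal DCS-AM value of the constructed instance equals α(G) whenever G is not complete, so DCS-AM is at least as hard to approximate as Maximum Independent Set. -/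
open scoped Classical

noncomputable section

lemma frame_adj {V : Type*} (G : SimpleGraph V) (v a b : V) :
    (frameOf G v).Adj a b ↔ a ≠ b ∧ ((a = v ∧ ¬ G.Adj v b) ∨ (b = v ∧ ¬ G.Adj v a)) :=
  SimpleGraph.fromRel_adj _ a b

lemma minDegIn_le {V : Type*} (H : SimpleGraph V) (S : Finset V) {w : V} (hw : w ∈ S) :
    minDegIn H S ≤ (S.filter (fun u => H.Adj w u)).card := by
  unfold minDegIn
  rw [dif_pos ⟨w, hw⟩]
  exact Finset.inf'_le _ hw

lemma one_le_minDegIn {V : Type*} {H : SimpleGraph V} {S : Finset V}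
    (h : 1 ≤ minDegIn H S) :
    S.Nonempty ∧ ∀ w ∈ S, 1 ≤ (S.filter (fun u => H.Adj w u)).card := by
  unfold minDegIn at h
  by_cases hS : S.Nonempty
  · rw [dif_pos hS] at h
    exact ⟨hS, fun w hw => le_trans h (Finset.inf'_le _ hw)⟩
  · rw [dif_neg hS] at h
    omega

lemma filter_adj_subset {V : Type*} (G : SimpleGraph V) {v w : V} (hwv : w ≠ v)
    (S : Finset V) :
    S.filter (fun u => (frameOf G v).Adj w u) ⊆ {v} := by
  intro u hu
  rw [Finset.mem_filter, frame_adj] at hu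
  rcases hu.2.2 with ⟨h1, _⟩ | ⟨h1, _⟩
  · exact absurd h1 hwv
  · simp [h1]

lemma minDeg_le_one {V : Type*} (G : SimpleGraph V) (v : V) (S : Finset V) :
    minDegIn (frameOf G v) S ≤ 1 := by
  by_cases hS : S.Nonempty
  · by_cases hex : ∃ w ∈ S, w ≠ v
    · obtain ⟨w, hwS, hwv⟩ := hex
      calc minDegIn (frameOf G v) S
          ≤ (S.filter (fun u => (frameOf G v).Adj w u)).card := minDegIn_le _ _ hwS
        _ ≤ ({v} : Finset V).card := Finset.card_le_card (filter_adj_subset G hwv S)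
        _ = 1 := Finset.card_singleton v
    · push_neg at hex
      obtain ⟨w, hwS⟩ := hS
      have hempty : S.filter (fun u => (frameOf G v).Adj w u) = ∅ := by
        refine Finset.filter_false_of_mem ?_
        intro u hu hadj
        exact hadj.ne ((hex w hwS).trans (hex u hu).symm)
      have := minDegIn_le (frameOf G v) S hwS
      rw [hempty] at this
      simp only [Finset.card_empty] at this
      omega
  · unfold minDegIn
    rw [dif_neg hS]
    omega

lemma mem_of_one_le {V : Type*} (G : SimpleGraph V) {v : V} {S : Finset V}
    (h : 1 ≤ minDegIn (frameOf G v) S) :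
    v ∈ S ∧ ∀ w ∈ S, ¬ G.Adj v w := by
  obtain ⟨hS, hdeg⟩ := one_le_minDegIn h
  have key : ∀ w ∈ S, w ≠ v → v ∈ S ∧ ¬ G.Adj v w := by
    intro w hwS hwv
    have h1 := hdeg w hwS
    obtain ⟨u, hu⟩ := Finset.card_pos.mp
      (show 0 < (S.filter (fun u => (frameOf G v).Adj w u)).card from h1)
    rw [Finset.mem_filter, frame_adj] at hu
    rcases hu.2.2 with ⟨h1', _⟩ | ⟨h1', h2'⟩
    · exact absurd h1' hwv
    · exact ⟨h1' ▸ hu.1, h2'⟩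
  constructor
  · obtain ⟨w, hwS⟩ := hS
    by_cases hwv : w = v
    · exact hwv ▸ hwS
    · exact (key w hwS hwv).1
  · intro w hwS
    by_cases hwv : w = v
    · subst hwv; exact G.loopless.irrefl w
    · exact (key w hwS hwv).2

/-- with `α = α(G)` the independence number of `G`, for every `S ⊆ V`:
(i) `min-deg(G_v[S]) ≤ 1` for every `v`; (ii) `I_S = {v : min-deg(G_v[S]) ≥ 1}` is an
independent set of `G`; (iii) `Σ_v min-deg(G_v[S]) ≤ |I_S| ≤ α`.  Combined with the forward
direction, if `G` is not complete then the optimal DCS-AM value of the constructed instance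
equals `α(G)`, so DCS-AM is at least as hard to approximate as Maximum Independent Set. -/
theorem stmt11 {V : Type*} [Fintype V] (G : SimpleGraph V)
    (hnc : ∃ a b, a ≠ b ∧ ¬ G.Adj a b) :
    ∃ α : ℕ,
      IsGreatest {m : ℕ | ∃ I : Finset V, (∀ a ∈ I, ∀ b ∈ I, ¬ G.Adj a b) ∧ I.card = m} α ∧
      (∀ S : Finset V,
        (∀ v, minDegIn (frameOf G v) S ≤ 1) ∧
        (∀ a ∈ Finset.univ.filter (fun v => 1 ≤ minDegIn (frameOf G v) S),
          ∀ b ∈ Finset.univ.filter (fun v => 1 ≤ minDegIn (frameOf G v) S), ¬ G.Adj a b) ∧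
        (∑ v : V, minDegIn (frameOf G v) S ≤
          (Finset.univ.filter (fun v => 1 ≤ minDegIn (frameOf G v) S)).card) ∧
        (Finset.univ.filter (fun v => 1 ≤ minDegIn (frameOf G v) S)).card ≤ α) ∧
      IsGreatest {m : ℕ | ∃ S : Finset V, ∑ v : V, minDegIn (frameOf G v) S = m} α := by
  set T : Finset (Finset V) :=
    Finset.univ.powerset.filter (fun I => ∀ a ∈ I, ∀ b ∈ I, ¬ G.Adj a b) with hT
  have hTne : T.Nonempty := ⟨∅, by simp [hT]⟩
  set α := T.sup Finset.card with hα
  have hmemT : ∀ I : Finset V, (∀ a ∈ I, ∀ b ∈ I, ¬ G.Adj a b) → I ∈ T := by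
    intro I hI
    rw [hT, Finset.mem_filter]
    exact ⟨Finset.mem_powerset.mpr (Finset.subset_univ I), hI⟩
  -- first IsGreatest
  have hg1 : IsGreatest {m : ℕ | ∃ I : Finset V,
      (∀ a ∈ I, ∀ b ∈ I, ¬ G.Adj a b) ∧ I.card = m} α := by
    constructor
    · obtain ⟨I, hIT, hIc⟩ := Finset.exists_mem_eq_sup T hTne Finset.card
      refine ⟨I, ?_, hIc.symm⟩
      simp only [hT, Finset.mem_filter] at hIT
      exact hIT.2
    · rintro m ⟨I, hI, rfl⟩
      exact Finset.le_sup (hmemT I hI)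
  -- α ≥ 2
  have hα2 : 2 ≤ α := by
    obtain ⟨a, b, hab, hnadj⟩ := hnc
    refine hg1.2 ⟨{a, b}, ?_, Finset.card_pair hab⟩
    intro x hx y hy
    simp only [Finset.mem_insert, Finset.mem_singleton] at hx hy
    rcases hx with rfl | rfl <;> rcases hy with rfl | rfl
    · exact G.loopless.irrefl _
    · exact hnadj
    · exact fun h => hnadj h.symm
    · exact G.loopless.irrefl _
  -- key facts per S
  have hkey : ∀ S : Finset V,
      (∀ v, minDegIn (frameOf G v) S ≤ 1) ∧
      (∀ a ∈ Finset.univ.filter (fun v => 1 ≤ minDegIn (frameOf G v) S),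
        ∀ b ∈ Finset.univ.filter (fun v => 1 ≤ minDegIn (frameOf G v) S), ¬ G.Adj a b) ∧
      (∑ v : V, minDegIn (frameOf G v) S ≤
        (Finset.univ.filter (fun v => 1 ≤ minDegIn (frameOf G v) S)).card) ∧
      (Finset.univ.filter (fun v => 1 ≤ minDegIn (frameOf G v) S)).card ≤ α := by
    intro S
    have indep : ∀ a ∈ Finset.univ.filter (fun v => 1 ≤ minDegIn (frameOf G v) S),
        ∀ b ∈ Finset.univ.filter (fun v => 1 ≤ minDegIn (frameOf G v) S), ¬ G.Adj a b := by
      intro a ha b hb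
      rw [Finset.mem_filter] at ha hb
      have hb' := (mem_of_one_le G hb.2).1
      exact (mem_of_one_le G ha.2).2 b hb'
    refine ⟨fun v => minDeg_le_one G v S, indep, ?_, ?_⟩
    · calc ∑ v : V, minDegIn (frameOf G v) S
          ≤ ∑ v : V, (if 1 ≤ minDegIn (frameOf G v) S then 1 else 0) := by
            refine Finset.sum_le_sum ?_
            intro v _
            by_cases h : 1 ≤ minDegIn (frameOf G v) S
            · simpa [h] using minDeg_le_one G v S
            · simp [h]; omega
        _ = (Finset.univ.filter (fun v => 1 ≤ minDegIn (frameOf G v) S)).card :=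
            (Finset.card_filter _ _).symm
    · exact hg1.2 ⟨_, indep, rfl⟩
  refine ⟨α, hg1, hkey, ?_, ?_⟩
  · -- membership: choose maximum independent set I
    obtain ⟨I, hI, hIc⟩ := hg1.1
    have hIcard : 2 ≤ I.card := hIc ▸ hα2
    have hIne : I.Nonempty := Finset.card_pos.mp (by omega)
    refine ⟨I, ?_⟩
    have hzero : ∀ v ∉ I, minDegIn (frameOf G v) I = 0 := by
      intro v hv
      obtain ⟨w, hwI⟩ := hIne
      have hwv : w ≠ v := fun h => hv (h ▸ hwI)
      have hempty : I.filter (fun u => (frameOf G v).Adj w u) = ∅ := by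
        refine Finset.filter_false_of_mem ?_
        intro u hu hadj
        have := filter_adj_subset G hwv I (Finset.mem_filter.mpr ⟨hu, hadj⟩)
        rw [Finset.mem_singleton] at this
        exact hv (this ▸ hu)
      have := minDegIn_le (frameOf G v) I hwI
      rw [hempty] at this
      simpa using this
    have hone : ∀ v ∈ I, minDegIn (frameOf G v) I = 1 := by
      intro v hv
      refine le_antisymm (minDeg_le_one G v I) ?_
      unfold minDegIn
      rw [dif_pos hIne]
      refine Finset.le_inf' _ _ ?_
      intro w hw
      by_cases hwv : w = v
      · subst hwv
        obtain ⟨b, hbI, hbv⟩ := Finset.exists_mem_ne (show 1 < I.card by omega) w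
        refine Finset.card_pos.mpr ⟨b, Finset.mem_filter.mpr ⟨hbI, ?_⟩⟩
        rw [frame_adj]
        exact ⟨Ne.symm hbv, Or.inl ⟨rfl, hI w hw b hbI⟩⟩
      · refine Finset.card_pos.mpr ⟨v, Finset.mem_filter.mpr ⟨hv, ?_⟩⟩
        rw [frame_adj]
        exact ⟨hwv, Or.inr ⟨rfl, hI v hv w hw⟩⟩
    calc ∑ v : V, minDegIn (frameOf G v) I
        = ∑ v ∈ I, minDegIn (frameOf G v) I :=
          (Finset.sum_subset (Finset.subset_univ I) (fun v _ hv => hzero v hv)).symm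
      _ = ∑ v ∈ I, 1 := Finset.sum_congr rfl hone
      _ = I.card := by simp
      _ = α := hIc
  · rintro m ⟨S, rfl⟩
    obtain ⟨_, _, h3, h4⟩ := hkey S
    exact le_trans h3 h4

end
end

section
/- Let S_1, …, S_m be subsets of a universe U = {x_1, …, x_n}, and let T ⊆ {1, …, m} with |T| = c be a set cover (i.e., every x_i lies in S_j for some j ∈ T). In the MCSS instance constructed from this set system, the edge set F consisting of the m+1 path edges {x, y}, {y, s_1}, {s_1, s_2}, …, {s_{m−1}, s_m} together with the edges { {s_j, x} : j ∈ T } has size m + 1 + c and induces a connected spanning subgraph in every frame G_0, G_1, …, G_n. -/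
open scoped Classical

noncomputable section

/-- The vertex set `V = {s_1, …, s_m, x, y}` of the MCSS instance constructed from a set
system of `m` sets: `Sum.inl j` is the set-vertex `s_j`, `Sum.inr true` is `x`, and
`Sum.inr false` is `y`. -/
abbrev MV (m : ℕ) := Fin m ⊕ Bool

def xv {m : ℕ} : MV m := Sum.inr true
def yv {m : ℕ} : MV m := Sum.inr false
def sv {m : ℕ} (j : Fin m) : MV m := Sum.inl j

/-- The edges of the path `y, s_1, …, s_m`. -/
def tailRel (m : ℕ) : MV m → MV m → Prop := fun a b =>
  (∃ h : 0 < m, a = yv ∧ b = sv ⟨0, h⟩) ∨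
  (∃ j j' : Fin m, (j' : ℕ) = (j : ℕ) + 1 ∧ a = sv j ∧ b = sv j')

/-- The frames of the MCSS instance built from the set system `mem` (where `mem i j` means
element `x_i` belongs to set `S_j`): frame `0` is the path `x, y, s_1, …, s_m`; for
`1 ≤ i ≤ n`, frame `i` is the path `y, s_1, …, s_m` together with the edges `{s_j, x}` for
every `j` with `x_i ∈ S_j`. -/
def frameG (m n : ℕ) (mem : Fin n → Fin m → Prop) (t : Fin (n + 1)) :
    SimpleGraph (MV m) :=
  SimpleGraph.fromRel (fun a b =>
    ((t : ℕ) = 0 ∧ ((a = xv ∧ b = yv) ∨ tailRel m a b)) ∨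
    (∃ i : Fin n, (t : ℕ) = (i : ℕ) + 1 ∧
      (tailRel m a b ∨ ∃ j : Fin m, mem i j ∧ a = sv j ∧ b = xv)))

-- auxiliary
lemma xv_ne_yv {m : ℕ} : (xv : MV m) ≠ yv := by simp [xv, yv]

lemma sv_ne_xv {m : ℕ} (j : Fin m) : sv j ≠ xv := by simp [sv, xv]

lemma sv_ne_yv {m : ℕ} (j : Fin m) : sv j ≠ yv := by simp [sv, yv]

lemma tail_ne {m : ℕ} {a b : MV m} (h : tailRel m a b) : a ≠ b := by
  rcases h with ⟨h, rfl, rfl⟩ | ⟨j, j', hj, rfl, rfl⟩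
  · simp [yv, sv]
  · simp only [sv, ne_eq, Sum.inl.injEq]
    intro hh; subst hh; omega

def prevv {m : ℕ} (j : Fin m) : MV m :=
  if h : (j : ℕ) = 0 then yv else sv ⟨(j : ℕ) - 1, by omega⟩

lemma prevv_ne_xv {m : ℕ} (j : Fin m) : prevv j ≠ xv := by
  unfold prevv; split
  · exact fun h => xv_ne_yv h.symm
  · exact sv_ne_xv _

lemma prevv_eq_sv {m : ℕ} {j k : Fin m} (h : prevv j = sv k) :
    (j : ℕ) ≠ 0 ∧ (k : ℕ) = (j : ℕ) - 1 := by
  unfold prevv at h; split at h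
  · exact absurd h.symm (sv_ne_yv _)
  · rename_i hj
    have h2 := Sum.inl.inj h
    exact ⟨hj, by rw [← h2]⟩

lemma tailRel_iff {m : ℕ} {a b : MV m} :
    tailRel m a b ↔ ∃ j : Fin m, a = prevv j ∧ b = sv j := by
  constructor
  · rintro (⟨h, rfl, rfl⟩ | ⟨j, j', hj, rfl, rfl⟩)
    · exact ⟨⟨0, h⟩, by simp [prevv], rfl⟩
    · have hp : prevv j' = sv j := by
        rw [prevv, dif_neg (by omega)]
        unfold sv
        congr 1
        exact Fin.ext (by simp only [Fin.val_mk]; omega)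
      exact ⟨j', hp.symm, rfl⟩
  · rintro ⟨j, rfl, rfl⟩
    by_cases h : (j : ℕ) = 0
    · exact Or.inl ⟨by omega, by simp [prevv, h], by congr 1; exact Fin.ext h⟩
    · exact Or.inr ⟨⟨(j : ℕ) - 1, by omega⟩, j, by simp only [Fin.val_mk]; omega, by simp [prevv, h], rfl⟩

lemma frame0_adj_of {m n : ℕ} {mem : Fin n → Fin m → Prop} {a b : MV m}
    (h : (a = xv ∧ b = yv) ∨ tailRel m a b) :
    (frameG m n mem 0).Adj a b := by
  rw [frameG, SimpleGraph.fromRel_adj]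
  refine ⟨?_, Or.inl (Or.inl ⟨by simp, h⟩)⟩
  rcases h with ⟨rfl, rfl⟩ | h
  · exact xv_ne_yv
  · exact tail_ne h

lemma edgeSet_frame0 {m n : ℕ} {mem : Fin n → Fin m → Prop} :
    (frameG m n mem 0).edgeSet =
      insert s(xv, yv) ((fun j : Fin m => s(prevv j, sv j)) '' Set.univ) := by
  ext e
  induction e using Sym2.ind with
  | _ a b =>
    simp only [SimpleGraph.mem_edgeSet, Set.mem_insert_iff, Set.mem_image, Set.mem_univ,
      true_and]
    constructor
    · intro h
      rw [frameG, SimpleGraph.fromRel_adj] at h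
      obtain ⟨hne, h⟩ := h
      have h0 : ¬ ∃ i : Fin n, ((0 : Fin (n+1)) : ℕ) = (i : ℕ) + 1 ∧
          (tailRel m a b ∨ ∃ j : Fin m, mem i j ∧ a = sv j ∧ b = xv) := by
        rintro ⟨i, hi, -⟩; simp at hi
      have h0' : ¬ ∃ i : Fin n, ((0 : Fin (n+1)) : ℕ) = (i : ℕ) + 1 ∧
          (tailRel m b a ∨ ∃ j : Fin m, mem i j ∧ b = sv j ∧ a = xv) := by
        rintro ⟨i, hi, -⟩; simp at hi
      rcases h with (⟨-, h⟩ | h) | (⟨-, h⟩ | h)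
      · rcases h with ⟨rfl, rfl⟩ | h
        · exact Or.inl rfl
        · obtain ⟨j, rfl, rfl⟩ := tailRel_iff.mp h
          exact Or.inr ⟨j, rfl⟩
      · exact absurd h h0
      · rcases h with ⟨rfl, rfl⟩ | h
        · exact Or.inl (Sym2.eq_swap)
        · obtain ⟨j, rfl, rfl⟩ := tailRel_iff.mp h
          exact Or.inr ⟨j, Sym2.eq_swap⟩
      · exact absurd h h0'
    · rintro (h | ⟨j, h⟩)
      · rw [Sym2.eq_iff] at h
        rcases h with ⟨rfl, rfl⟩ | ⟨rfl, rfl⟩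
        · exact frame0_adj_of (Or.inl ⟨rfl, rfl⟩)
        · exact (frame0_adj_of (Or.inl ⟨rfl, rfl⟩)).symm
      · rw [Sym2.eq_iff] at h
        have ht : tailRel m (prevv j) (sv j) := tailRel_iff.mpr ⟨j, rfl, rfl⟩
        rcases h with ⟨rfl, rfl⟩ | ⟨rfl, rfl⟩
        · exact frame0_adj_of (Or.inr ht)
        · exact (frame0_adj_of (Or.inr ht)).symm

lemma tailEdge_inj {m : ℕ} : Function.Injective (fun j : Fin m => s(prevv j, sv j)) := by
  intro j k h
  simp only [Sym2.eq_iff] at h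
  rcases h with ⟨-, h2⟩ | ⟨h1, h2⟩
  · exact Sum.inl.inj h2
  · obtain ⟨hj, hjv⟩ := prevv_eq_sv h1
    obtain ⟨hk, hkv⟩ := prevv_eq_sv h2.symm
    have : (j : ℕ) = (k : ℕ) := by omega
    exact Fin.ext this

lemma xy_not_tailEdge {m : ℕ} :
    s(xv, yv) ∉ ((fun j : Fin m => s(prevv j, sv j)) '' Set.univ) := by
  rintro ⟨j, -, h⟩
  rw [Sym2.eq_iff] at h
  rcases h with ⟨h1, -⟩ | ⟨-, h2⟩
  · exact prevv_ne_xv j h1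
  · exact sv_ne_xv j h2

lemma setEdge_inj {m : ℕ} : Function.Injective (fun j : Fin m => s(sv j, xv)) := by
  intro j k h
  simp only [Sym2.eq_iff] at h
  rcases h with ⟨h1, -⟩ | ⟨-, h2⟩
  · exact Sum.inl.inj h1
  · exact absurd h2.symm (sv_ne_xv k)

lemma reach_sv {m : ℕ} {G : SimpleGraph (MV m)}
    (htail : ∀ a b, tailRel m a b → G.Adj a b) (j : Fin m) :
    G.Reachable yv (sv j) := by
  obtain ⟨k, hk⟩ := j
  induction k with
  | zero => exact (htail _ _ (Or.inl ⟨hk, rfl, rfl⟩)).reachable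
  | succ k ih =>
    have h1 : G.Reachable yv (sv ⟨k, by omega⟩) := ih (by omega)
    exact h1.trans (htail _ _ (Or.inr ⟨⟨k, by omega⟩, ⟨k + 1, hk⟩,
      by simp only [Fin.val_mk], rfl, rfl⟩)).reachable

lemma conn_aux {m : ℕ} {G : SimpleGraph (MV m)}
    (htail : ∀ a b, tailRel m a b → G.Adj a b)
    (hx : G.Adj yv xv ∨ ∃ j, G.Adj (sv j) xv) : G.Connected := by
  rw [SimpleGraph.connected_iff]
  have key : ∀ v : MV m, G.Reachable yv v := by
    intro v
    match v with
    | Sum.inl j => exact reach_sv htail j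
    | Sum.inr false => exact SimpleGraph.Reachable.refl _
    | Sum.inr true =>
      rcases hx with h | ⟨j, h⟩
      · exact h.reachable
      · exact (reach_sv htail j).trans h.reachable
  exact ⟨fun u v => (key u).symm.trans (key v), ⟨yv⟩⟩

/-- if `T` is a set cover of size `c`, then the edge set `F` consisting of the
`m + 1` path edges (the edges of frame `G_0`) together with the edges `{s_j, x}` for `j ∈ T`
has size `m + 1 + c` and induces a connected spanning subgraph in every frame. -/
theorem stmt17 (m n : ℕ) (mem : Fin n → Fin m → Prop)
    (T : Set (Fin m)) (c : ℕ) (hc : T.ncard = c)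
    (hcover : ∀ i : Fin n, ∃ j ∈ T, mem i j) :
    let F : Set (Sym2 (MV m)) :=
      (frameG m n mem 0).edgeSet ∪ (fun j => s(sv j, xv)) '' T
    F.ncard = m + 1 + c ∧
      ∀ t : Fin (n + 1), ((frameG m n mem t) ⊓ SimpleGraph.fromEdgeSet F).Connected := by
  intro F
  have hE0 : (frameG m n mem 0).edgeSet =
      insert s(xv, yv) ((fun j : Fin m => s(prevv j, sv j)) '' Set.univ) := edgeSet_frame0
  constructor
  · have himg : ((fun j : Fin m => s(prevv j, sv j)) '' Set.univ).ncard = m := by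
      rw [Set.ncard_image_of_injective _ tailEdge_inj, Set.ncard_univ]
      simp
    have hE0card : (frameG m n mem 0).edgeSet.ncard = m + 1 := by
      rw [hE0, Set.ncard_insert_of_notMem xy_not_tailEdge (Set.toFinite _), himg]
    have hTcard : ((fun j : Fin m => s(sv j, xv)) '' T).ncard = c := by
      rw [Set.ncard_image_of_injective _ setEdge_inj, hc]
    have hdisj : Disjoint ((frameG m n mem 0).edgeSet)
        ((fun j : Fin m => s(sv j, xv)) '' T) := by
      rw [Set.disjoint_left]
      intro e he1 he2
      obtain ⟨j, -, rfl⟩ := he2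
      rw [hE0] at he1
      rcases he1 with h | ⟨k, -, h⟩
      · rw [Sym2.eq_iff] at h
        rcases h with ⟨h1, -⟩ | ⟨h1, -⟩
        · exact sv_ne_xv j h1
        · exact sv_ne_yv j h1
      · rw [Sym2.eq_iff] at h
        rcases h with ⟨-, h2⟩ | ⟨h1, -⟩
        · exact sv_ne_xv k h2
        · exact prevv_ne_xv k h1
    show ((frameG m n mem 0).edgeSet ∪ (fun j : Fin m => s(sv j, xv)) '' T).ncard = m + 1 + c
    rw [Set.ncard_union_eq hdisj (Set.toFinite _) (Set.toFinite _), hE0card, hTcard]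
  · intro t
    have hF0 : ∀ a b : MV m, (frameG m n mem 0).Adj a b → s(a, b) ∈ F := fun a b h =>
      Or.inl ((SimpleGraph.mem_edgeSet _).mpr h)
    have htail_H : ∀ a b, tailRel m a b →
        ((frameG m n mem t) ⊓ SimpleGraph.fromEdgeSet F).Adj a b := by
      intro a b htab
      refine ⟨?_, (SimpleGraph.fromEdgeSet_adj _).mpr ⟨hF0 a b (frame0_adj_of (Or.inr htab)),
        tail_ne htab⟩⟩
      rw [frameG, SimpleGraph.fromRel_adj]
      refine ⟨tail_ne htab, Or.inl ?_⟩
      rcases Nat.eq_zero_or_pos (t : ℕ) with h0 | hpos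
      · exact Or.inl ⟨h0, Or.inr htab⟩
      · refine Or.inr ⟨⟨(t : ℕ) - 1, by have := t.isLt; omega⟩,
          by simp only [Fin.val_mk]; omega, Or.inl htab⟩
    refine conn_aux htail_H ?_
    rcases Nat.eq_zero_or_pos (t : ℕ) with h0 | hpos
    · left
      have hadj : (frameG m n mem t).Adj xv yv := by
        rw [frameG, SimpleGraph.fromRel_adj]
        exact ⟨xv_ne_yv, Or.inl (Or.inl ⟨h0, Or.inl ⟨rfl, rfl⟩⟩)⟩
      refine ⟨hadj.symm, (SimpleGraph.fromEdgeSet_adj _).mpr ⟨?_, fun h => xv_ne_yv h.symm⟩⟩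
      have : s(xv, yv) ∈ F := hF0 _ _ (frame0_adj_of (Or.inl ⟨rfl, rfl⟩))
      rwa [Sym2.eq_swap] at this
    · right
      set i : Fin n := ⟨(t : ℕ) - 1, by have := t.isLt; omega⟩ with hi
      obtain ⟨j, hjT, hmem⟩ := hcover i
      refine ⟨j, ?_, (SimpleGraph.fromEdgeSet_adj _).mpr ⟨Or.inr ⟨j, hjT, rfl⟩, sv_ne_xv j⟩⟩
      rw [frameG, SimpleGraph.fromRel_adj]
      exact ⟨sv_ne_xv j, Or.inl (Or.inr ⟨i, by simp only [hi, Fin.val_mk]; omega,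
        Or.inr ⟨j, hmem, rfl, rfl⟩⟩)⟩

end
end
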